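/- arXiv:2601.22344 — 11 statements merged into one kernel-verified Lean document; each statement's English description precedes it below -/
import Mathlib

section
/- Let A ∈ ℂ^{n×m} be nonzero. Then the expected residual after one step of randomly pivoted LU satisfies Σ_{(i,j): A_{ij} ≠ 0} (|A_{ij}|²/‖A‖_F²) · ( A − (1/A_{ij})·A e_j e_i^T A ) = A − (A A* A)/‖A‖_F², where ‖A‖_F² = tr(A*A). -/
/-! The weight `‖A i j‖²` turns `(A i j)⁻¹` into `conj (A i j)`, which also kills the terms with
`A i j = 0`, so the excluded pivots need no special care. The weights then sum to `‖A‖_F²`,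
and `∑ conj (A i j) • A e_j e_iᵀ A = A (∑ conj (A i j) e_j e_iᵀ) A = A Aᴴ A`. -/

open Matrix Finset

/-- Squared Frobenius norm of a complex matrix, `‖A‖_F² = tr(AᴴA)`. -/
noncomputable def frobSq {n m : ℕ} (A : Matrix (Fin n) (Fin m) ℂ) : ℝ :=
  ∑ i, ∑ j, ‖A i j‖ ^ 2

section RCLike

variable {𝕜 : Type*} [RCLike 𝕜]

theorem RCLike.norm_sq_smul_inv (x : 𝕜) : (‖x‖ ^ 2 : ℝ) • x⁻¹ = star x := by
  rcases eq_or_ne x 0 with rfl | hx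
  · simp
  · rw [RCLike.inv_def, RCLike.real_smul_eq_coe_mul, mul_left_comm, ← RCLike.ofReal_mul,
      mul_inv_cancel₀ (by positivity), RCLike.ofReal_one, mul_one, RCLike.star_def]

theorem norm_sq_smul_sub_inv_smul {M : Type*} [AddCommGroup M] [Module 𝕜 M] [Module ℝ M]
    [IsScalarTower ℝ 𝕜 M] (x : 𝕜) (a b : M) :
    (‖x‖ ^ 2 : ℝ) • (a - x⁻¹ • b) = (‖x‖ ^ 2 : ℝ) • a - star x • b := by
  rw [smul_sub, ← smul_assoc, RCLike.norm_sq_smul_inv]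

theorem ite_ne_zero_norm_sq_div_smul {M : Type*} [AddCommGroup M] [Module 𝕜 M] [Module ℝ M]
    [IsScalarTower ℝ 𝕜 M] (x : 𝕜) (c : ℝ) (a b : M) :
    (if x ≠ 0 then (‖x‖ ^ 2 / c) • (a - x⁻¹ • b) else 0)
      = c⁻¹ • ((‖x‖ ^ 2 : ℝ) • a - star x • b) := by
  rw [← norm_sq_smul_sub_inv_smul, smul_smul, inv_mul_eq_div]
  split_ifs with hx
  · rfl
  · simp [not_not.mp hx]

end RCLike

namespace Matrix

variable {ι κ R : Type*} [Fintype ι] [Fintype κ] [DecidableEq ι] [DecidableEq κ]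
  [CommSemiring R]

theorem smul_mul_single_one_mul {μ : Type*} (c : R) (A : Matrix ι κ R) (B : Matrix ι μ R)
    (i : ι) (j : κ) : c • (A * single j i (1 : R) * B) = A * single j i c * B := by
  rw [← Matrix.smul_mul, ← Matrix.mul_smul, smul_single, smul_eq_mul, mul_one]

theorem sum_star_smul_mul_single_mul [StarRing R] (A : Matrix ι κ R) :
    ∑ i, ∑ j, star (A i j) • (A * single j i (1 : R) * A) = A * Aᴴ * A := by
  conv_rhs => rw [matrix_eq_sum_single Aᴴ, Finset.sum_comm]
  simp only [Matrix.mul_sum, Matrix.sum_mul, conjTranspose_apply, smul_mul_single_one_mul]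

end Matrix

theorem frobSq_eq_zero_iff {n m : ℕ} (A : Matrix (Fin n) (Fin m) ℂ) : frobSq A = 0 ↔ A = 0 := by
  simp only [frobSq, Finset.sum_eq_zero_iff_of_nonneg (fun _ _ => Finset.sum_nonneg
    (fun _ _ => sq_nonneg _)), Finset.sum_eq_zero_iff_of_nonneg (fun _ _ => sq_nonneg _)]
  simp [← Matrix.ext_iff]

theorem sum_sum_norm_sq_smul_eq_frobSq_smul {n m : ℕ} (A : Matrix (Fin n) (Fin m) ℂ) :
    ∑ i, ∑ j, (‖A i j‖ ^ 2 : ℝ) • A = frobSq A • A := by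
  simp only [frobSq, Finset.sum_smul]

theorem inv_frobSq_smul_frobSq_smul {n m : ℕ} (A : Matrix (Fin n) (Fin m) ℂ) :
    (frobSq A)⁻¹ • frobSq A • A = A := by
  by_cases hA : A = 0
  · simp [hA]
  · exact inv_smul_smul₀ (mt (frobSq_eq_zero_iff A).mp hA) A

theorem rplu_expected_residual_general {n m : ℕ} (A : Matrix (Fin n) (Fin m) ℂ) :
    (∑ i : Fin n, ∑ j : Fin m,
      if A i j ≠ 0 then
        (‖A i j‖ ^ 2 / frobSq A) •
          (A - (A i j)⁻¹ • (A * Matrix.single j i (1 : ℂ) * A))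
      else 0)
    = A - (frobSq A)⁻¹ • (A * Aᴴ * A) := by
  calc _ = ∑ i, ∑ j, (frobSq A)⁻¹ •
          ((‖A i j‖ ^ 2 : ℝ) • A - star (A i j) • (A * single j i (1 : ℂ) * A)) := by
        simp only [ite_ne_zero_norm_sq_div_smul]
    _ = (frobSq A)⁻¹ • (frobSq A • A - A * Aᴴ * A) := by
        simp only [← Finset.smul_sum, Finset.sum_sub_distrib, sum_sum_norm_sq_smul_eq_frobSq_smul,
          Matrix.sum_star_smul_mul_single_mul]
    _ = A - (frobSq A)⁻¹ • (A * Aᴴ * A) := by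
        rw [smul_sub, inv_frobSq_smul_frobSq_smul]

/-- **Theorem (expected one-step RPLU residual).**  For nonzero `A ∈ ℂ^{n×m}`,
`∑_{(i,j): A_{ij} ≠ 0} (|A_{ij}|²/‖A‖_F²) (A − A_{ij}⁻¹ A e_j e_iᵀ A)
  = A − (A Aᴴ A)/‖A‖_F²`. -/
theorem rplu_expected_residual {n m : ℕ} (A : Matrix (Fin n) (Fin m) ℂ) (hA : A ≠ 0) :
    (∑ i : Fin n, ∑ j : Fin m,
      if A i j ≠ 0 then
        (‖A i j‖ ^ 2 / frobSq A) •
          (A - (A i j)⁻¹ • (A * Matrix.single j i (1 : ℂ) * A))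
      else 0)
    = A - (frobSq A)⁻¹ • (A * Aᴴ * A) :=
  rplu_expected_residual_general A
end

section
/- Let A ∈ ℂ^{n×m} be nonzero and define Φ(C) = C − C²/tr(C) for a nonzero PSD matrix C. Then the expected Gram matrix of the one-step randomly pivoted LU residual satisfies, in the PSD (Loewner) order: Σ_{(i,j): A_{ij} ≠ 0} (|A_{ij}|²/‖A‖_F²) · ( A − (1/A_{ij})·A e_j e_i^T A )* ( A − (1/A_{ij})·A e_j e_i^T A ) ⪯ 2·Φ(A*A) = 2 A*A − (2/‖A‖_F²)·(A*A)². -/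
open Matrix Finset
open scoped ComplexOrder

/-!
Multiplying the Gram matrix of the residual at pivot `(i, j)` by `|A_ij|²` clears the
denominators and leaves a polynomial in the entries of `A`. Summed over *all* pivots, these
polynomials give `2‖A‖_F² AᴴA - 2(AᴴA)²`: the two cross terms each sum to `(AᴴA)²`, and the last
term sums to `tr(AᴴA) AᴴA`. The expected Gram matrix is the same sum restricted to the pivots with
`A_ij ≠ 0`, so the gap in the inequality is the sum of the polynomials at the zero entries, each
of which is `(AᴴA)_jj Aᴴ e_i e_iᵀ A ⪰ 0`.
-/

namespace Matrix

variable {ι κ 𝕜 : Type*} [Fintype ι] [Fintype κ] [RCLike 𝕜]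

lemma sum_sum_norm_sq_pos {A : Matrix ι κ 𝕜} (hA : A ≠ 0) : 0 < ∑ i, ∑ j, ‖A i j‖ ^ 2 := by
  obtain ⟨i, j, hij⟩ : ∃ i j, A i j ≠ 0 := by
    by_contra! h
    exact hA (Matrix.ext h)
  exact sum_pos' (fun _ _ => sum_nonneg fun _ _ => by positivity)
    ⟨i, mem_univ i, sum_pos' (fun _ _ => by positivity) ⟨j, mem_univ j, by positivity⟩⟩

lemma trace_conjTranspose_mul_self_eq_sum_sum_norm_sq (A : Matrix ι κ 𝕜) :
    (Aᴴ * A).trace = ((∑ i, ∑ j, ‖A i j‖ ^ 2 : ℝ) : 𝕜) := by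
  simp only [trace, diag, mul_apply, conjTranspose_apply, RCLike.star_def, RCLike.conj_mul]
  push_cast
  exact sum_comm

variable [DecidableEq ι] [DecidableEq κ]

lemma smul_mul_single_mul {ι' κ' : Type*} [Fintype ι'] (c : 𝕜) (M : Matrix ι' ι 𝕜) (i : ι)
    (j : κ) (N : Matrix κ κ' 𝕜) : c • (M * single i j (1 : 𝕜) * N) = M * single i j c * N := by
  rw [← Matrix.smul_mul, ← Matrix.mul_smul, smul_single, smul_eq_mul, mul_one]

lemma sum_sum_star_smul_mul_single_mul (A : Matrix ι κ 𝕜) (M : Matrix κ κ 𝕜)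
    (N : Matrix ι κ 𝕜) :
    ∑ i, ∑ j, star (A i j) • (M * single j i (1 : 𝕜) * N) = M * Aᴴ * N := by
  simp only [smul_mul_single_mul, ← Matrix.sum_mul, ← Matrix.mul_sum]
  rw [sum_comm, sum_sum_single]
  rfl

lemma sum_sum_smul_mul_single_mul (A : Matrix ι κ 𝕜) (M : Matrix κ ι 𝕜) (N : Matrix κ κ 𝕜) :
    ∑ i, ∑ j, A i j • (M * single i j (1 : 𝕜) * N) = M * A * N := by
  simp only [smul_mul_single_mul, ← Matrix.sum_mul, ← Matrix.mul_sum, ← matrix_eq_sum_single]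

def pivotResidual (A : Matrix ι κ 𝕜) (i : ι) (j : κ) : Matrix ι κ 𝕜 :=
  A - (A i j)⁻¹ • (A * single j i (1 : 𝕜) * A)

/-- The expansion of `‖A i j‖ ^ 2 • ((pivotResidual A i j)ᴴ * pivotResidual A i j)`, which stays
meaningful when `A i j = 0`. -/
def scaledResidualGram (A : Matrix ι κ 𝕜) (i : ι) (j : κ) : Matrix κ κ 𝕜 :=
  ‖A i j‖ ^ 2 • (Aᴴ * A) - star (A i j) • (Aᴴ * A * single j i (1 : 𝕜) * A)
    - A i j • (Aᴴ * single i j (1 : 𝕜) * (Aᴴ * A)) + (Aᴴ * A) j j • (Aᴴ * single i i (1 : 𝕜) * A)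

lemma norm_sq_smul_pivotResidual_gram {A : Matrix ι κ 𝕜} {i : ι} {j : κ} (h : A i j ≠ 0) :
    ‖A i j‖ ^ 2 • ((pivotResidual A i j)ᴴ * pivotResidual A i j) = scaledResidualGram A i j := by
  have hsandwich : Aᴴ * single i j (1 : 𝕜) * Aᴴ * (A * single j i (1 : 𝕜) * A)
      = (Aᴴ * A) j j • (Aᴴ * single i i (1 : 𝕜) * A) := by
    calc Aᴴ * single i j (1 : 𝕜) * Aᴴ * (A * single j i (1 : 𝕜) * A)
        = Aᴴ * (single i j (1 : 𝕜) * (Aᴴ * A) * single j i (1 : 𝕜)) * A := by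
          simp only [Matrix.mul_assoc]
      _ = _ := by
          rw [single_mul_mul_single, one_mul, mul_one, ← Matrix.smul_mul, ← Matrix.mul_smul,
            smul_single, smul_eq_mul, mul_one]
  have hnorm : (‖A i j‖ ^ 2 : 𝕜) = star (A i j) * A i j := by
    rw [RCLike.star_def, RCLike.conj_mul]
  have hstar : star (A i j) ≠ 0 := star_ne_zero.2 h
  simp only [pivotResidual, scaledResidualGram, RCLike.real_smul_eq_coe_smul (K := 𝕜),
    RCLike.ofReal_pow, conjTranspose_sub, conjTranspose_smul, conjTranspose_mul,
    conjTranspose_single, star_one, Matrix.sub_mul, Matrix.mul_sub, Matrix.smul_mul,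
    Matrix.mul_smul, smul_sub, smul_smul, star_inv₀]
  simp only [Matrix.mul_assoc] at hsandwich ⊢
  rw [hsandwich, hnorm]
  match_scalars <;> field_simp

lemma inv_smul_scaledResidualGram_sub_ite (A : Matrix ι κ 𝕜) (i : ι) (j : κ) (r : ℝ) :
    r⁻¹ • scaledResidualGram A i j
        - (if A i j ≠ 0 then
            (‖A i j‖ ^ 2 / r) • ((pivotResidual A i j)ᴴ * pivotResidual A i j) else 0)
      = if A i j = 0 then r⁻¹ • scaledResidualGram A i j else 0 := by
  by_cases h : A i j = 0
  · simp [h]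
  · rw [if_pos h, if_neg h, div_eq_inv_mul, mul_smul, norm_sq_smul_pivotResidual_gram h, sub_self]

lemma posSemidef_scaledResidualGram_of_eq_zero {A : Matrix ι κ 𝕜} {i : ι} {j : κ}
    (h : A i j = 0) : (scaledResidualGram A i j).PosSemidef := by
  have hrow :
      Aᴴ * single i i (1 : 𝕜) * A = (single i i (1 : 𝕜) * A)ᴴ * (single i i (1 : 𝕜) * A) := by
    rw [conjTranspose_mul, conjTranspose_single, star_one, Matrix.mul_assoc, Matrix.mul_assoc,
      ← Matrix.mul_assoc (single i i (1 : 𝕜)), single_mul_single_same, one_mul]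
  simp only [scaledResidualGram, h, norm_zero, star_zero, zero_smul, sub_zero,
    zero_pow two_ne_zero, zero_add, hrow]
  exact (posSemidef_conjTranspose_mul_self _).smul (posSemidef_conjTranspose_mul_self A).diag_nonneg

lemma sum_sum_scaledResidualGram (A : Matrix ι κ 𝕜) :
    ∑ i, ∑ j, scaledResidualGram A i j
      = (2 * ∑ i, ∑ j, ‖A i j‖ ^ 2) • (Aᴴ * A) - (2 : ℝ) • (Aᴴ * A * (Aᴴ * A)) := by
  have hdiag : ∑ i : ι, ∑ j, (Aᴴ * A) j j • (Aᴴ * single i i (1 : 𝕜) * A)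
      = (∑ i, ∑ j, ‖A i j‖ ^ 2) • (Aᴴ * A) := by
    rw [sum_comm]
    simp only [← smul_sum, ← sum_smul, ← Matrix.sum_mul, ← Matrix.mul_sum, sum_single_one,
      Matrix.mul_one]
    change (Aᴴ * A).trace • _ = _
    rw [trace_conjTranspose_mul_self_eq_sum_sum_norm_sq, ← RCLike.real_smul_eq_coe_smul]
  simp only [scaledResidualGram, sum_add_distrib, sum_sub_distrib, hdiag,
    sum_sum_star_smul_mul_single_mul, sum_sum_smul_mul_single_mul]
  simp only [← sum_smul, Matrix.mul_assoc]
  module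

end Matrix

/-- **Theorem (one-step Gram matrix bound for RPLU).**  For nonzero `A ∈ ℂ^{n×m}`, in the
Loewner (PSD) order,
`∑_{(i,j): A_{ij}≠0} (|A_{ij}|²/‖A‖_F²) (A − A_{ij}⁻¹ A e_j e_iᵀ A)ᴴ (A − A_{ij}⁻¹ A e_j e_iᵀ A)
  ⪯ 2 Φ(AᴴA) = 2 AᴴA − (2/‖A‖_F²)(AᴴA)²`,
i.e. the difference (right minus left) is positive semidefinite. -/
theorem rplu_expected_gram_le {n m : ℕ} (A : Matrix (Fin n) (Fin m) ℂ) (hA : A ≠ 0) :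
    ((2 : ℝ) • (Aᴴ * A) - (2 / frobSq A) • ((Aᴴ * A) * (Aᴴ * A)) -
      ∑ i : Fin n, ∑ j : Fin m,
        if A i j ≠ 0 then
          (‖A i j‖ ^ 2 / frobSq A) •
            ((A - (A i j)⁻¹ • (A * Matrix.single j i (1 : ℂ) * A))ᴴ *
              (A - (A i j)⁻¹ • (A * Matrix.single j i (1 : ℂ) * A)))
        else 0).PosSemidef := by
  have hF : 0 < frobSq A := sum_sum_norm_sq_pos hA
  have hsum : ∑ i, ∑ j, scaledResidualGram A i j
      = (2 * frobSq A) • (Aᴴ * A) - (2 : ℝ) • (Aᴴ * A * (Aᴴ * A)) :=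
    sum_sum_scaledResidualGram A
  have hmean : (2 : ℝ) • (Aᴴ * A) - (2 / frobSq A) • (Aᴴ * A * (Aᴴ * A))
      = ∑ i, ∑ j, (frobSq A)⁻¹ • scaledResidualGram A i j := by
    simp only [← smul_sum, hsum, smul_sub, smul_smul]
    congr 2 <;> field_simp
  have hgap : (∑ i, ∑ j,
      if A i j = 0 then (frobSq A)⁻¹ • scaledResidualGram A i j else 0).PosSemidef :=
    posSemidef_sum _ fun i _ => posSemidef_sum _ fun j _ => by
      split_ifs with h
      · exact (posSemidef_scaledResidualGram_of_eq_zero h).smul (inv_nonneg.2 hF.le)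
      · exact .zero
  convert hgap using 1
  rw [hmean, ← sum_sub_distrib]
  refine sum_congr rfl fun i _ => ?_
  rw [← sum_sub_distrib]
  exact sum_congr rfl fun j _ => inv_smul_scaledResidualGram_sub_ite A i j _
end

section
/- Let A ∈ ℂ^{n×m} have all entries nonzero (A_{ij} ≠ 0 for all i,j). Then the one-step Gram-matrix bound holds with equality: Σ_{i,j} (|A_{ij}|²/‖A‖_F²) · ( A − (1/A_{ij})·A e_j e_i^T A )* ( A − (1/A_{ij})·A e_j e_i^T A ) = 2 A*A − (2/‖A‖_F²)·(A*A)². -/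
open Matrix Finset

/-!
Weighting the Gram matrix of the residual by `|a|²`, `a = A i j`, clears the pivot from the
denominators: with `G = AᴴA`,
`|a|² A⁽¹⁾ᴴA⁽¹⁾ = |a|² G - ā G e_j e_iᵀ A - a Aᴴ e_i e_jᵀ G + G_jj Aᴴ e_i e_iᵀ A`.
Summed over all pivots, the two cross terms reassemble `Aᴴ` and `A` into `G²` each, and the
last term gives `tr G • G`. Since `‖A‖_F² = tr G`, the weighted sum is `2 tr G • G - 2 G²`,
and dividing by `‖A‖_F²` is the theorem.
-/

namespace Matrix

variable {K : Type*} [Field K] [StarRing K] {m n : Type*} [Fintype m] [Fintype n]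

theorem sum_sum_mul_star_eq_trace (A : Matrix m n K) :
    ∑ i, ∑ j, A i j * star (A i j) = (Aᴴ * A).trace := by
  rw [Finset.sum_comm]
  simp only [trace, diag_apply, mul_apply, conjTranspose_apply, mul_comm]

variable [DecidableEq m] [DecidableEq n]

/-- `single j i 1` is `e_j e_iᵀ`, so `A * single j i 1 * A = A_{:,j} A_{i,:}`. -/
def luResidual (A : Matrix m n K) (i : m) (j : n) : Matrix m n K :=
  A - (A i j)⁻¹ • (A * single j i (1 : K) * A)

theorem sum_sum_star_smul_single (A : Matrix m n K) :
    ∑ i, ∑ j, star (A i j) • single j i (1 : K) = Aᴴ := by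
  rw [Finset.sum_comm, matrix_eq_sum_single Aᴴ]
  simp only [smul_single, smul_eq_mul, mul_one, conjTranspose_apply]

theorem mul_star_smul_gram_luResidual (A : Matrix m n K) (i : m) (j : n)
    (hpivot : A i j ≠ 0) :
    (A i j * star (A i j)) • ((luResidual A i j)ᴴ * luResidual A i j)
      = (A i j * star (A i j)) • (Aᴴ * A) - star (A i j) • (Aᴴ * A * single j i (1 : K) * A)
        - A i j • (Aᴴ * single i j (1 : K) * Aᴴ * A)
        + (Aᴴ * A) j j • (Aᴴ * single i i (1 : K) * A) := by
  have hstar : star (A i j) ≠ 0 := star_ne_zero.2 hpivot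
  have hcross : Aᴴ * single i j (1 : K) * Aᴴ * A * single j i (1 : K) * A
      = (Aᴴ * A) j j • (Aᴴ * single i i (1 : K) * A) := by
    rw [show Aᴴ * single i j (1 : K) * Aᴴ * A * single j i (1 : K) * A
        = Aᴴ * (single i j (1 : K) * (Aᴴ * A) * single j i (1 : K)) * A by
          simp only [Matrix.mul_assoc],
      single_mul_mul_single, one_mul, mul_one]
    rw [show single i i ((Aᴴ * A) j j) = (Aᴴ * A) j j • single i i (1 : K) by
      rw [smul_single, smul_eq_mul, mul_one], Matrix.mul_smul, Matrix.smul_mul]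
  simp only [luResidual, conjTranspose_sub, conjTranspose_smul, conjTranspose_mul,
    conjTranspose_single, star_one, star_inv₀, Matrix.sub_mul, Matrix.mul_sub, Matrix.smul_mul,
    Matrix.mul_smul, ← Matrix.mul_assoc]
  rw [hcross]
  simp only [smul_sub, smul_smul]
  match_scalars <;> field_simp

theorem sum_sum_mul_star_smul_gram_luResidual (A : Matrix m n K) (hA : ∀ i j, A i j ≠ 0) :
    ∑ i, ∑ j, (A i j * star (A i j)) • ((luResidual A i j)ᴴ * luResidual A i j)
      = (2 * (Aᴴ * A).trace) • (Aᴴ * A) - (2 : K) • (Aᴴ * A * (Aᴴ * A)) := by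
  have hleft : ∑ i, ∑ j, star (A i j) • (Aᴴ * A * single j i (1 : K) * A)
      = Aᴴ * A * (Aᴴ * A) := calc
    _ = ∑ i, ∑ j, Aᴴ * A * (star (A i j) • single j i (1 : K)) * A := by
      simp only [Matrix.mul_smul, Matrix.smul_mul]
    _ = Aᴴ * A * (∑ i, ∑ j, star (A i j) • single j i (1 : K)) * A := by
      simp only [Matrix.mul_sum, Matrix.sum_mul]
    _ = Aᴴ * A * (Aᴴ * A) := by rw [sum_sum_star_smul_single, Matrix.mul_assoc]
  have hright : ∑ i, ∑ j, A i j • (Aᴴ * single i j (1 : K) * Aᴴ * A)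
      = Aᴴ * A * (Aᴴ * A) := calc
    _ = ∑ i, ∑ j, Aᴴ * (A i j • single i j (1 : K)) * Aᴴ * A := by
      simp only [Matrix.mul_smul, Matrix.smul_mul]
    _ = Aᴴ * (∑ i, ∑ j, A i j • single i j (1 : K)) * Aᴴ * A := by
      simp only [Matrix.mul_sum, Matrix.sum_mul]
    _ = Aᴴ * A * (Aᴴ * A) := by
      simp only [smul_single, smul_eq_mul, mul_one, ← matrix_eq_sum_single, Matrix.mul_assoc]
  have hdiag : ∑ i : m, ∑ j : n, (Aᴴ * A) j j • (Aᴴ * single i i (1 : K) * A)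
      = (Aᴴ * A).trace • (Aᴴ * A) := by
    rw [Finset.sum_comm]
    calc _ = ∑ j : n, (Aᴴ * A) j j • (Aᴴ * (∑ i : m, single i i (1 : K)) * A) := by
          simp only [Matrix.mul_sum, Matrix.sum_mul, Finset.smul_sum]
      _ = (Aᴴ * A).trace • (Aᴴ * A) := by
          rw [sum_single_one, Matrix.mul_one, ← Finset.sum_smul]
          rfl
  have hweight : ∑ i, ∑ j, (A i j * star (A i j)) • (Aᴴ * A : Matrix n n K)
      = (Aᴴ * A).trace • (Aᴴ * A) := by
    simp only [← Finset.sum_smul, sum_sum_mul_star_eq_trace]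
  simp only [mul_star_smul_gram_luResidual A _ _ (hA _ _), Finset.sum_add_distrib,
    Finset.sum_sub_distrib, hleft, hright, hdiag, hweight]
  module

end Matrix

theorem frobSq_eq_trace {n m : ℕ} (A : Matrix (Fin n) (Fin m) ℂ) :
    ((frobSq A : ℝ) : ℂ) = (Aᴴ * A).trace := by
  simp only [frobSq, Complex.ofReal_sum, Complex.ofReal_pow, ← Complex.mul_conj',
    ← Complex.star_def, sum_sum_mul_star_eq_trace]

open scoped ComplexOrder in
theorem conjTranspose_mul_self_eq_zero_of_frobSq_eq_zero {n m : ℕ}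
    {A : Matrix (Fin n) (Fin m) ℂ} (h : frobSq A = 0) : Aᴴ * A = 0 := by
  rw [conjTranspose_mul_self_eq_zero, ← trace_conjTranspose_mul_self_eq_zero_iff,
    ← frobSq_eq_trace, h, Complex.ofReal_zero]

/-- **Theorem (one-step Gram identity when all entries are nonzero).**
If every entry of `A ∈ ℂ^{n×m}` is nonzero, then
`∑_{i,j} (|A_{ij}|²/‖A‖_F²) (A − A_{ij}⁻¹ A e_j e_iᵀ A)ᴴ (A − A_{ij}⁻¹ A e_j e_iᵀ A)
  = 2 AᴴA − (2/‖A‖_F²)(AᴴA)²`. -/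
theorem rplu_expected_gram_eq {n m : ℕ} (A : Matrix (Fin n) (Fin m) ℂ)
    (hA : ∀ i j, A i j ≠ 0) :
    (∑ i : Fin n, ∑ j : Fin m,
      (‖A i j‖ ^ 2 / frobSq A) •
        ((A - (A i j)⁻¹ • (A * Matrix.single j i (1 : ℂ) * A))ᴴ *
          (A - (A i j)⁻¹ • (A * Matrix.single j i (1 : ℂ) * A))))
    = (2 : ℝ) • (Aᴴ * A) - (2 / frobSq A) • ((Aᴴ * A) * (Aᴴ * A)) := by
  have hweight (i : Fin n) (j : Fin m) :
      ((‖A i j‖ ^ 2 / frobSq A : ℝ) : ℂ) = (frobSq A : ℂ)⁻¹ * (A i j * star (A i j)) := by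
    rw [Complex.star_def, Complex.mul_conj']
    push_cast
    ring
  calc _ = (frobSq A : ℂ)⁻¹ • ∑ i, ∑ j,
        (A i j * star (A i j)) • ((luResidual A i j)ᴴ * luResidual A i j) := by
        simp only [Finset.smul_sum, smul_smul, ← hweight, ← Complex.coe_smul, luResidual]
    _ = (frobSq A : ℂ)⁻¹ •
          (((2 : ℂ) * frobSq A) • (Aᴴ * A) - (2 : ℂ) • (Aᴴ * A * (Aᴴ * A))) := by
        rw [sum_sum_mul_star_smul_gram_luResidual A hA, frobSq_eq_trace]
    _ = _ := by
        rcases eq_or_ne (frobSq A) 0 with h0 | h0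
        · simp [conjTranspose_mul_self_eq_zero_of_frobSq_eq_zero h0]
        · have hF : (frobSq A : ℂ) ≠ 0 := Complex.ofReal_ne_zero.2 h0
          simp only [← Complex.coe_smul, smul_sub, smul_smul]
          match_scalars <;> field_simp
end

section
/- Let A ∈ ℂ^{n×n} be unitary with all entries nonzero (A_{ij} ≠ 0 for all i,j). Then the expected squared Frobenius norm of the residual after one step of randomly pivoted LU equals Σ_{i,j} (|A_{ij}|²/‖A‖_F²) · ‖A − (1/A_{ij})·A e_j e_i^T A‖_F² = 2(n − 1) = 2·‖A − ⟦A⟧_1‖_F², where ⟦A⟧_1 is the best rank-1 approximation of A. -/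
open Matrix Finset

/-- `tailTrace M hM r` is the sum of the eigenvalues of the Hermitian matrix `M`
after (excluding) the `r` largest; for `M = AᴴA` it equals `‖A − ⟦A⟧ᵣ‖_F²`. -/
noncomputable def tailTrace {p : ℕ} (M : Matrix (Fin p) (Fin p) ℂ) (hM : M.IsHermitian)
    (r : ℕ) : ℝ :=
  ∑ j ∈ Finset.univ.filter (fun j : Fin p => (j : ℕ) < p - r),
    hM.eigenvalues (Tuple.sort hM.eigenvalues j)

/-! Write the residual of pivot `(i, j)` as `A − B` with `B = A_{ij}⁻¹ A E_{ji} A`. For unitary `A`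
the Frobenius norm is invariant under multiplication by `A` on either side, so `‖A‖_F² = n`,
`‖B‖_F² = |A_{ij}|⁻²`, and the Frobenius inner product is `tr(AᴴB) = A_{ij}⁻¹ tr(E_{ji} A) = 1`.
Hence the residual has squared norm `n − 2 + |A_{ij}|⁻²`; under the weights `|A_{ij}|²/n` the
term `|A_{ij}|⁻²` contributes `n² / n`, giving `(n − 2) + n = 2(n − 1)`. Since `AᴴA = 1` has all
eigenvalues `1`, the tail trace after the top eigenvalue is `n − 1`. -/

section Frobenius

variable {k m n : ℕ}

lemma frobSq_eq_re_trace (A : Matrix (Fin m) (Fin n) ℂ) : frobSq A = (Aᴴ * A).trace.re := by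
  simp only [frobSq, trace, Matrix.diag, mul_apply, conjTranspose_apply, Complex.re_sum,
    RCLike.star_def, Complex.conj_mul', ← Complex.ofReal_pow, Complex.ofReal_re]
  exact sum_comm

lemma frobSq_smul (c : ℂ) (A : Matrix (Fin m) (Fin n) ℂ) :
    frobSq (c • A) = ‖c‖ ^ 2 * frobSq A := by
  simp only [frobSq, Matrix.smul_apply, smul_eq_mul, norm_mul, mul_pow, mul_sum]

lemma frobSq_single (i : Fin m) (j : Fin n) (c : ℂ) : frobSq (single i j c) = ‖c‖ ^ 2 := by
  simp [frobSq, single_apply, ite_and, apply_ite]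

lemma frobSq_sub (A B : Matrix (Fin m) (Fin n) ℂ) :
    frobSq (A - B) = frobSq A - 2 * (Aᴴ * B).trace.re + frobSq B := by
  have hBA : (Bᴴ * A).trace = star (Aᴴ * B).trace := by
    rw [← trace_conjTranspose, conjTranspose_mul, conjTranspose_conjTranspose]
  simp only [frobSq_eq_re_trace, conjTranspose_sub, Matrix.sub_mul, Matrix.mul_sub, trace_sub,
    Complex.sub_re, hBA, RCLike.star_def, Complex.conj_re]
  ring

lemma frobSq_mul_left {U : Matrix (Fin k) (Fin m) ℂ} (hU : Uᴴ * U = 1)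
    (M : Matrix (Fin m) (Fin n) ℂ) : frobSq (U * M) = frobSq M := by
  rw [frobSq_eq_re_trace, frobSq_eq_re_trace, conjTranspose_mul, Matrix.mul_assoc,
    ← Matrix.mul_assoc Uᴴ, hU, Matrix.one_mul]

lemma frobSq_mul_right {U : Matrix (Fin m) (Fin n) ℂ} (hU : U * Uᴴ = 1)
    (M : Matrix (Fin k) (Fin m) ℂ) : frobSq (M * U) = frobSq M := by
  rw [frobSq_eq_re_trace, frobSq_eq_re_trace, conjTranspose_mul, Matrix.mul_assoc, trace_mul_comm,
    Matrix.mul_assoc, Matrix.mul_assoc, hU, Matrix.mul_one]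

lemma frobSq_of_conjTranspose_mul_self_eq_one {U : Matrix (Fin m) (Fin n) ℂ} (hU : Uᴴ * U = 1) :
    frobSq U = n := by
  simp [frobSq_eq_re_trace, hU]

end Frobenius

lemma frobSq_pivot_residual {n : ℕ} {A : Matrix (Fin n) (Fin n) ℂ} (hA : Aᴴ * A = 1)
    {i j : Fin n} (hij : A i j ≠ 0) :
    frobSq (A - (A i j)⁻¹ • (A * single j i 1 * A)) = n - 2 + (‖A i j‖ ^ 2)⁻¹ := by
  have hA' : A * Aᴴ = 1 := mul_eq_one_comm.mp hA
  have hcross : (Aᴴ * ((A i j)⁻¹ • (A * single j i 1 * A))).trace = 1 := by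
    rw [Matrix.mul_smul, Matrix.mul_assoc, ← Matrix.mul_assoc Aᴴ, hA, Matrix.one_mul, trace_smul,
      trace_single_mul, one_smul, smul_eq_mul, inv_mul_cancel₀ hij]
  rw [frobSq_sub, hcross, frobSq_smul, Matrix.mul_assoc, frobSq_mul_left hA, frobSq_mul_right hA',
    frobSq_single, frobSq_of_conjTranspose_mul_self_eq_one hA, norm_inv, inv_pow]
  simp only [Complex.one_re, norm_one]
  ring

lemma Matrix.IsHermitian.eigenvalues_of_eq_one {p : ℕ} {M : Matrix (Fin p) (Fin p) ℂ}
    (hM : M.IsHermitian) (h : M = 1) (i : Fin p) : hM.eigenvalues i = 1 := by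
  subst h
  simp [hM.eigenvalues_eq, dotProduct_comm, ← EuclideanSpace.inner_eq_star_dotProduct,
    hM.eigenvectorBasis.orthonormal.1 i]

lemma tailTrace_of_eq_one {p : ℕ} {M : Matrix (Fin p) (Fin p) ℂ} (hM : M.IsHermitian)
    (h : M = 1) (r : ℕ) : tailTrace M hM r = (p - r : ℕ) := by
  simp [tailTrace, hM.eigenvalues_of_eq_one h, Fin.card_filter_val_lt]

/-- **Theorem (one-step RPLU residual on a dense unitary matrix).**
If `A ∈ ℂ^{n×n}` (`n ≥ 1`) is unitary and all its entries are nonzero, then the expected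
squared Frobenius norm of the residual after one step of randomly pivoted LU satisfies
`∑_{i,j} (|A_{ij}|²/‖A‖_F²) ‖A − A_{ij}⁻¹ A e_j e_iᵀ A‖_F² = 2(n−1) = 2‖A − ⟦A⟧₁‖_F²`. -/
theorem rplu_unitary_one_step {n : ℕ} (hn : 0 < n) (A : Matrix (Fin n) (Fin n) ℂ)
    (hunit : Aᴴ * A = 1) (hA : ∀ i j, A i j ≠ 0) :
    (∑ i : Fin n, ∑ j : Fin n,
        (‖A i j‖ ^ 2 / frobSq A) *
          frobSq (A - (A i j)⁻¹ • (A * Matrix.single j i (1 : ℂ) * A)))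
      = 2 * ((n : ℝ) - 1) ∧
    2 * ((n : ℝ) - 1)
      = 2 * tailTrace (Aᴴ * A) (Matrix.isHermitian_conjTranspose_mul_self A) 1 := by
  have hfrob : frobSq A = n := frobSq_of_conjTranspose_mul_self_eq_one hunit
  have hterm (i j : Fin n) : ‖A i j‖ ^ 2 / frobSq A *
      frobSq (A - (A i j)⁻¹ • (A * single j i 1 * A)) = ‖A i j‖ ^ 2 * ((n - 2) / n) + 1 / n := by
    have hinv : ‖A i j‖ ^ 2 * (‖A i j‖ ^ 2)⁻¹ = 1 := mul_inv_cancel₀ (by simpa using hA i j)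
    rw [frobSq_pivot_residual hunit (hA i j), hfrob]
    linear_combination hinv / n
  refine ⟨?_, ?_⟩
  · calc _ = ∑ i : Fin n, ∑ j : Fin n, (‖A i j‖ ^ 2 * ((n - 2) / n) + 1 / n) := by
          simp only [hterm]
      _ = frobSq A * ((n - 2) / n) + n * n * (1 / n) := by
          simp only [sum_add_distrib, ← sum_mul, sum_const, card_univ, Fintype.card_fin,
            nsmul_eq_mul, frobSq]
      _ = 2 * (n - 1) := by
          rw [hfrob]
          field_simp
          ring
  · rw [tailTrace_of_eq_one _ hunit, Nat.cast_sub hn]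
    push_cast
    ring
end

section
/- Let C ∈ ℂ^{n×n} be a nonzero positive semidefinite matrix. For indices (i,j), let L_{ij} = [C e_i, C e_j] ∈ ℂ^{n×2}, let B_{ij} be the 2×2 submatrix with entries C_{ii}, C_{ij}, C_{ji}, C_{jj}, and let K_{ij} = L_{ij} B_{ij}^† L_{ij}* (with B_{ij}^† the Moore–Penrose pseudoinverse). Then the expected one-step residuals satisfy: Σ_{i,j} (|C_{ij}|²/‖C‖_F²) · tr( C − K_{ij} ) ≤ Σ_{i: C_{ii} ≠ 0} (C_{ii}/tr(C)) · tr( C − (1/C_{ii})·C e_i e_i^T C ). Equivalently, the expected trace of the residual of one symmetric rank-2 randomly pivoted LU step is at most the expected trace of the residual of one randomly pivoted Cholesky step. -/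
/-!
Write `C = Rᴴ R`. Then `K_{ij} = Rᴴ P R`, where `P` is the orthogonal projection onto the
span of the columns `R e_i, R e_j`, and the RPCholesky correction `C e_i e_iᵀ C / C_{ii}` is
`Rᴴ P₁ R`, where `P₁` is the projection onto the line through `R e_i`. Since `P₁ ≤ P`, every
SRPLU residual satisfies `tr (C - K_{ij}) ≤ T - pᵢ / aᵢ`, with `T = tr C`, `aᵢ = C_{ii}` and
`pᵢ = ∑ₖ |C_{ik}|²`. Averaging, the SRPLU side is at most `T - (∑ᵢ pᵢ² / aᵢ) / F`, where
`F = ‖C‖_F² = ∑ᵢ pᵢ`, while the RPCholesky side equals `T - F / T`; and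
`F² ≤ T ∑ᵢ pᵢ² / aᵢ` is the Cauchy–Schwarz inequality.
-/

open Matrix Finset
open scoped ComplexOrder

/-- The Moore–Penrose pseudoinverse of a square complex matrix, characterized by the four
Penrose equations (which always have a unique solution). -/
noncomputable def moorePenrose {p : ℕ} (B : Matrix (Fin p) (Fin p) ℂ) :
    Matrix (Fin p) (Fin p) ℂ :=
  open scoped Classical in
  if h : ∃ X : Matrix (Fin p) (Fin p) ℂ,
      B * X * B = B ∧ X * B * X = X ∧ (B * X)ᴴ = B * X ∧ (X * B)ᴴ = X * B
  then h.choose else 0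

/-- The symmetric rank-2 correction `K_{ij} = L_{ij} B_{ij}† L_{ij}ᴴ` of SRPLU, where
`L_{ij} = [C e_i, C e_j] ∈ ℂ^{n×2}` and `B_{ij} = C(\{i,j\},\{i,j\}) ∈ ℂ^{2×2}`. -/
noncomputable def srpluK {n : ℕ} (C : Matrix (Fin n) (Fin n) ℂ) (i j : Fin n) :
    Matrix (Fin n) (Fin n) ℂ :=
  (C.submatrix id ![i, j]) * moorePenrose (C.submatrix ![i, j] ![i, j]) *
    (C.submatrix id ![i, j])ᴴ

open scoped MatrixOrder

namespace Matrix

variable {m k : Type*} [Fintype m] [Fintype k]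

def IsMoorePenroseInverse (B X : Matrix m m ℂ) : Prop :=
  B * X * B = B ∧ X * B * X = X ∧ (B * X)ᴴ = B * X ∧ (X * B)ᴴ = X * B

/-- The witness is `x ↦ x⁻¹` applied to `B`: since `0⁻¹ = 0`, the scalar identities
`x x⁻¹ x = x` and `x⁻¹ x x⁻¹ = x⁻¹` hold on the whole spectrum, zero included. -/
theorem IsHermitian.exists_isMoorePenroseInverse [DecidableEq m] {B : Matrix m m ℂ}
    (hB : B.IsHermitian) : ∃ X, IsMoorePenroseInverse B X := by
  have hc (f : ℝ → ℝ) : ContinuousOn f (spectrum ℝ B) :=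
    B.finite_real_spectrum.continuousOn f
  have hmul (f g : ℝ → ℝ) : cfc f B * cfc g B = cfc (fun x => f x * g x) B :=
    (cfc_mul f g B (hc f) (hc g)).symm
  have hherm (f : ℝ → ℝ) : (cfc f B)ᴴ = cfc f B := IsSelfAdjoint.cfc
  have hinv (x : ℝ) : x⁻¹ * x * x⁻¹ = x⁻¹ := by simpa using mul_inv_mul_cancel x⁻¹
  suffices ∃ X, IsMoorePenroseInverse (cfc (fun x : ℝ => x) B) X by
    rwa [cfc_id' ℝ B (isHermitian_iff_isSelfAdjoint.mp hB)] at this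
  refine ⟨cfc (fun x : ℝ => x⁻¹) B, ?_, ?_, ?_, ?_⟩ <;>
    simp only [hmul, hherm, mul_inv_mul_cancel, hinv]

namespace IsMoorePenroseInverse

variable {M : Matrix m k ℂ} {X : Matrix k k ℂ}

theorem mul_mul_conjTranspose_mul_self (hX : IsMoorePenroseInverse (Mᴴ * M) X) :
    M * X * (Mᴴ * M) = M := by
  set B := Mᴴ * M
  have hBX : B * X * B = B := hX.1
  have hBXH : B * Xᴴ * B = B := by
    simpa [B, conjTranspose_mul, Matrix.mul_assoc] using congrArg conjTranspose hBX
  rw [← sub_eq_zero, ← conjTranspose_mul_self_eq_zero]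
  calc (M * X * B - M)ᴴ * (M * X * B - M)
      = B * Xᴴ * B * X * B - B * Xᴴ * B - B * X * B + B := by
        simp only [B, conjTranspose_sub, conjTranspose_mul, conjTranspose_conjTranspose,
          Matrix.sub_mul, Matrix.mul_sub, Matrix.mul_assoc]
        abel
    _ = 0 := by rw [hBXH, hBX]; abel

theorem isStarProjection_mul_mul_conjTranspose (hX : IsMoorePenroseInverse (Mᴴ * M) X) :
    IsStarProjection (M * X * Mᴴ) := by
  set P := M * X * Mᴴ
  have hPM : P * M = M := by
    simpa only [P, Matrix.mul_assoc] using hX.mul_mul_conjTranspose_mul_self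
  have hPPH : P * Pᴴ = P := by
    rw [show P * Pᴴ = M * X * (P * M)ᴴ by simp only [P, conjTranspose_mul, Matrix.mul_assoc],
      hPM]
  have hPH : Pᴴ = P := by rw [← hPPH, conjTranspose_mul, conjTranspose_conjTranspose]
  refine ⟨?_, hPH⟩
  show P * P = P
  rw [show P * P = P * M * X * Mᴴ by simp only [P, Matrix.mul_assoc], hPM]

end IsMoorePenroseInverse

theorem isStarProjection_inv_smul_mul_single_mul_conjTranspose [DecidableEq k]
    (N : Matrix m k ℂ) (a : k) :
    IsStarProjection (((Nᴴ * N) a a)⁻¹ • (N * single a a (1 : ℂ) * Nᴴ)) := by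
  set c := (Nᴴ * N) a a
  set E : Matrix k k ℂ := single a a 1
  have hc : star c = c := (isHermitian_conjTranspose_mul_self N).apply a a
  have hE : E * (Nᴴ * N) * E = c • E := by
    rw [single_mul_mul_single, smul_single]; simp [c]
  refine ⟨?_, ?_⟩
  · show _ * _ = _
    rw [smul_mul_smul, show N * E * Nᴴ * (N * E * Nᴴ) = N * (E * (Nᴴ * N) * E) * Nᴴ by
      simp only [Matrix.mul_assoc], hE, Matrix.mul_smul, Matrix.smul_mul, smul_smul]
    congr 1
    rw [mul_right_comm]; simpa using mul_inv_mul_cancel c⁻¹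
  · rw [IsSelfAdjoint, star_smul, star_inv₀, hc, star_eq_conjTranspose]
    simp [E, conjTranspose_mul, Matrix.mul_assoc]

theorem PosSemidef.norm_apply_sq_le {n : Type*} {C : Matrix n n ℂ} (hC : C.PosSemidef)
    (i j : n) :
    ‖C i j‖ ^ 2 ≤ (C i i).re * (C j j).re := by
  have hdet := (hC.submatrix ![i, j]).det_nonneg
  rw [det_fin_two] at hdet
  simp only [submatrix_apply, Matrix.cons_val_zero, Matrix.cons_val_one] at hdet
  have hii : ((C i i).re : ℂ) = C i i := hC.1.coe_re_apply_self i
  have hjj : ((C j j).re : ℂ) = C j j := hC.1.coe_re_apply_self j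
  rw [← hC.1.apply j i, Complex.star_def, Complex.mul_conj', ← hii, ← hjj] at hdet
  exact sub_nonneg.mp (Complex.zero_le_real.mp (by exact_mod_cast hdet))

theorem IsHermitian.trace_mul_single_mul [DecidableEq m] {C : Matrix m m ℂ}
    (hC : C.IsHermitian) (i : m) :
    trace (C * single i i (1 : ℂ) * C) = ((∑ k, ‖C i k‖ ^ 2 : ℝ) : ℂ) := by
  rw [Matrix.mul_assoc, trace_mul_comm, Matrix.mul_assoc, trace_single_mul, one_smul, mul_apply]
  push_cast
  refine sum_congr rfl fun k _ => ?_
  rw [← hC.apply k i, Complex.star_def, Complex.mul_conj']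

theorem IsHermitian.re_trace_sub_inv_smul_mul_single_mul [DecidableEq m] {C : Matrix m m ℂ}
    (hC : C.IsHermitian) (i : m) :
    (trace (C - (C i i)⁻¹ • (C * single i i (1 : ℂ) * C))).re
      = (trace C).re - (∑ k, ‖C i k‖ ^ 2) / (C i i).re := by
  have hii : C i i = ((C i i).re : ℂ) := (hC.coe_re_apply_self i).symm
  rw [trace_sub, trace_smul, hC.trace_mul_single_mul, hii, smul_eq_mul, ← Complex.ofReal_inv,
    ← Complex.ofReal_mul, Complex.sub_re, Complex.ofReal_re, Complex.ofReal_re, inv_mul_eq_div]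

end Matrix

theorem isMoorePenroseInverse_moorePenrose {p : ℕ} {B : Matrix (Fin p) (Fin p) ℂ}
    (h : ∃ X, B.IsMoorePenroseInverse X) : B.IsMoorePenroseInverse (moorePenrose B) := by
  unfold moorePenrose IsMoorePenroseInverse at *
  rw [dif_pos h]
  exact h.choose_spec

theorem frobSq_pos {n m : ℕ} {A : Matrix (Fin n) (Fin m) ℂ} (hA : A ≠ 0) : 0 < frobSq A := by
  obtain ⟨i, j, hij⟩ : ∃ i j, A i j ≠ 0 := by
    by_contra! h
    exact hA (ext h)
  exact sum_pos' (fun _ _ => sum_nonneg fun _ _ => by positivity)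
    ⟨i, mem_univ _, sum_pos' (fun _ _ => by positivity) ⟨j, mem_univ _, by positivity⟩⟩

theorem inv_smul_mul_single_mul_le_srpluK {n : ℕ} {C : Matrix (Fin n) (Fin n) ℂ}
    (hC : C.PosSemidef) (i j : Fin n) :
    (C i i)⁻¹ • (C * single i i (1 : ℂ) * C) ≤ srpluK C i j := by
  obtain ⟨R, rfl⟩ := CStarAlgebra.nonneg_iff_eq_star_mul_self.mp hC.nonneg
  rw [star_eq_conjTranspose]
  set M := R.submatrix id ![i, j]
  have hX := isMoorePenroseInverse_moorePenrose
    (isHermitian_conjTranspose_mul_self M).exists_isMoorePenroseInverse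
  set P := M * moorePenrose (Mᴴ * M) * Mᴴ
  set Q := ((Rᴴ * R) i i)⁻¹ • (R * single i i (1 : ℂ) * Rᴴ)
  have hL : (Rᴴ * R).submatrix id ![i, j] = Rᴴ * M := by
    rw [submatrix_mul _ _ _ id _ Function.bijective_id, submatrix_id_id]
  have hB : (Rᴴ * R).submatrix ![i, j] ![i, j] = Mᴴ * M := by
    rw [submatrix_mul _ _ _ id _ Function.bijective_id, conjTranspose_submatrix]
  have hK : srpluK (Rᴴ * R) i j = Rᴴ * P * R := by
    simp only [srpluK, hL, hB, P, conjTranspose_mul, conjTranspose_conjTranspose,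
      Matrix.mul_assoc]
  have hQ : ((Rᴴ * R) i i)⁻¹ • (Rᴴ * R * single i i (1 : ℂ) * (Rᴴ * R)) = Rᴴ * Q * R := by
    simp only [Q, Matrix.mul_smul, Matrix.smul_mul, Matrix.mul_assoc]
  have hRE : R * single i i (1 : ℂ) = M * single (0 : Fin 2) i (1 : ℂ) := by
    ext a b
    by_cases h : i = b <;> simp [M, mul_apply, single_apply, h]
  have hPQ : P * Q = Q := by
    have hPM : P * M = M := by
      simpa only [P, Matrix.mul_assoc] using hX.mul_mul_conjTranspose_mul_self
    simp only [Q, Matrix.mul_smul, hRE]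
    rw [← Matrix.mul_assoc, ← Matrix.mul_assoc, hPM]
  have hQP : Q ≤ P :=
    (isStarProjection_inv_smul_mul_single_mul_conjTranspose R i).le_of_mul_eq_right
      hX.isStarProjection_mul_mul_conjTranspose hPQ
  rw [hK, hQ, ← star_eq_conjTranspose]
  exact star_left_conjugate_le_conjugate hQP R

theorem re_trace_sub_srpluK_le {n : ℕ} {C : Matrix (Fin n) (Fin n) ℂ} (hC : C.PosSemidef)
    (i j : Fin n) :
    (trace (C - srpluK C i j)).re
      ≤ (trace (C - (C i i)⁻¹ • (C * single i i (1 : ℂ) * C))).re := by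
  have h := (Complex.nonneg_iff.mp (inv_smul_mul_single_mul_le_srpluK hC i j).trace_nonneg).1
  rw [trace_sub, Complex.sub_re] at h
  simp only [trace_sub, Complex.sub_re]
  linarith

theorem sum_div_mul_sub_div_le {ι : Type*} (s : Finset ι) {a p : ι → ℝ}
    (ha : ∀ i ∈ s, 0 ≤ a i) (hap : ∀ i ∈ s, a i = 0 → p i = 0) (hp : 0 < ∑ i ∈ s, p i) :
    ∑ i ∈ s, p i / (∑ j ∈ s, p j) * (∑ j ∈ s, a j - p i / a i)
      ≤ ∑ i ∈ s, a i / (∑ j ∈ s, a j) * (∑ j ∈ s, a j - p i / a i) := by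
  set T := ∑ j ∈ s, a j with hTdef
  set F := ∑ j ∈ s, p j with hFdef
  have hT : 0 < T := by
    refine (sum_nonneg ha).lt_of_ne fun hT0 => hp.ne' (sum_eq_zero fun i hi => hap i hi ?_)
    exact (sum_eq_zero_iff_of_nonneg ha).mp hT0.symm i hi
  have hCS : F ^ 2 ≤ (∑ i ∈ s, p i ^ 2 / a i) * T := by
    refine sum_sq_le_sum_mul_sum_of_sq_le_mul s (fun i hi => div_nonneg (sq_nonneg _) (ha i hi))
      ha fun i hi => ?_
    rcases eq_or_ne (a i) 0 with h | h
    · simp [h, hap i hi h]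
    · field_simp; rfl
  have hlhs : ∑ i ∈ s, p i / F * (T - p i / a i) = T - (∑ i ∈ s, p i ^ 2 / a i) / F := by
    simp only [mul_sub, sum_sub_distrib, ← sum_mul, ← sum_div]
    congr 1
    · rw [div_self hp.ne', one_mul]
    · rw [sum_div]
      exact sum_congr rfl fun i _ => by ring
  have hrhs : ∑ i ∈ s, a i / T * (T - p i / a i) = T - F / T := by
    simp only [mul_sub, sum_sub_distrib, ← sum_mul, ← sum_div]
    congr 1
    · exact div_mul_cancel₀ _ hT.ne'
    rw [hFdef, sum_div]
    refine sum_congr rfl fun i hi => ?_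
    rcases eq_or_ne (a i) 0 with h | h
    · simp [h, hap i hi h]
    · field_simp
  rw [hlhs, hrhs, sub_le_sub_iff_left, div_le_div_iff₀ hT hp]
  nlinarith

/-- **Theorem (one-step SRPLU beats one-step RPCholesky in expectation).**
For a nonzero PSD matrix `C ∈ ℂ^{n×n}`,
`∑_{i,j} (|C_{ij}|²/‖C‖_F²) tr(C − K_{ij})
  ≤ ∑_{i : C_{ii} ≠ 0} (C_{ii}/tr C) tr(C − C_{ii}⁻¹ C e_i e_iᵀ C)`. -/
theorem srplu_le_rpcholesky {n : ℕ} (C : Matrix (Fin n) (Fin n) ℂ)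
    (hC : C.PosSemidef) (hC0 : C ≠ 0) :
    (∑ i : Fin n, ∑ j : Fin n,
        (‖C i j‖ ^ 2 / frobSq C) * (Matrix.trace (C - srpluK C i j)).re)
      ≤ ∑ i ∈ Finset.univ.filter (fun i : Fin n => C i i ≠ 0),
          ((C i i).re / (Matrix.trace C).re) *
            (Matrix.trace (C - (C i i)⁻¹ • (C * Matrix.single i i (1 : ℂ) * C))).re := by
  set a : Fin n → ℝ := fun i => (C i i).re
  set p : Fin n → ℝ := fun i => ∑ k, ‖C i k‖ ^ 2
  have htr : (trace C).re = ∑ k, a k := by rw [trace, Complex.re_sum]; rfl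
  have hrpc (i : Fin n) :
      (trace (C - (C i i)⁻¹ • (C * single i i (1 : ℂ) * C))).re = ∑ k, a k - p i / a i := by
    rw [hC.1.re_trace_sub_inv_smul_mul_single_mul, htr]
  have ha (i : Fin n) (_ : i ∈ univ) : 0 ≤ a i := (Complex.nonneg_iff.mp hC.diag_nonneg).1
  have hap (i : Fin n) (_ : i ∈ univ) (hi : a i = 0) : p i = 0 :=
    sum_eq_zero fun k _ => by simpa [a, hi] using hC.norm_apply_sq_le i k
  have hF := frobSq_pos hC0
  calc _ ≤ ∑ i, ∑ j, ‖C i j‖ ^ 2 / frobSq C * (∑ k, a k - p i / a i) :=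
        sum_le_sum fun i _ => sum_le_sum fun j _ => mul_le_mul_of_nonneg_left
          ((re_trace_sub_srpluK_le hC i j).trans_eq (hrpc i)) (by positivity)
    _ = ∑ i, p i / (∑ k, p k) * (∑ k, a k - p i / a i) := by
        simp only [← sum_mul, ← sum_div]
        rfl
    _ ≤ ∑ i, a i / (∑ k, a k) * (∑ k, a k - p i / a i) :=
        sum_div_mul_sub_div_le univ ha hap hF
    _ = ∑ i ∈ univ with C i i ≠ 0, a i / (∑ k, a k) * (∑ k, a k - p i / a i) := by
        rw [sum_filter_of_ne]
        intro i _ h hii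
        simp [a, hii] at h
    _ = _ := sum_congr rfl fun i _ => by rw [hrpc, htr]
end

section
/- Let C ∈ ℂ^{n×n} be positive semidefinite and let (i,j) be indices. Let L_{ij} = [C e_i, C e_j] ∈ ℂ^{n×2}, B_{ij} = [[C_{ii}, C_{ij}],[C_{ji}, C_{jj}]] ∈ ℂ^{2×2}, and K_{ij} = L_{ij} B_{ij}^† L_{ij}*. If C_{ii} ≠ 0 then tr(K_{ij}) ≥ ‖C e_i‖₂² / C_{ii}. -/
open Matrix Finset
open scoped ComplexOrder

/-!
Write `C = Dᴴ D` and let `P` select the columns `i, j`, so that `L = C P` and `B = Pᴴ C P`.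
Any `X` with `B X B = B` (the pseudoinverse is one) also satisfies `L X B = L`, since
`D P (X B - 1)` has zero Gram matrix `(X B - 1)ᴴ (B X B - B)`. Substituting `L = L X B` gives
`L X Lᴴ - (C e_i)(C e_i)ᴴ / C_ii = (L X) S (L X)ᴴ` with `S = B - B e₀ e₀ᵀ B / B₀₀` the Schur
complement of `B₀₀`, which is positive semidefinite; now take traces.
-/

namespace Matrix

variable {𝕜 m n : Type*} [RCLike 𝕜] [Fintype m] [Fintype n] [DecidableEq m]

/-- Inverting the eigenvalues, with `0⁻¹ = 0`, gives a Moore–Penrose inverse. -/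
theorem IsHermitian.exists_penrose {B : Matrix m m 𝕜} (hB : B.IsHermitian) :
    ∃ X : Matrix m m 𝕜,
      B * X * B = B ∧ X * B * X = X ∧ (B * X)ᴴ = B * X ∧ (X * B)ᴴ = X * B := by
  obtain ⟨φ, d, rfl⟩ : ∃ (φ : Matrix m m 𝕜 ≃⋆ₐ[𝕜] Matrix m m 𝕜) (d : m → 𝕜),
      B = φ (diagonal d) := ⟨_, _, hB.spectral_theorem⟩
  have hd : ∀ i, star (d i * (d i)⁻¹) = d i * (d i)⁻¹ := fun i => by
    rcases eq_or_ne (d i) 0 with h | h <;> simp [h]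
  refine ⟨φ (diagonal d⁻¹), ?_, ?_, ?_, ?_⟩ <;>
    simp only [← map_mul, ← star_eq_conjTranspose, ← map_star, diagonal_mul_diagonal']
  · exact congrArg (φ ∘ diagonal) (funext fun i => mul_inv_mul_cancel (d i))
  · exact congrArg (φ ∘ diagonal) (funext fun i => by simpa using mul_inv_mul_cancel (d i)⁻¹)
  all_goals simp only [star_eq_conjTranspose, diagonal_conjTranspose, Pi.star_def, Pi.inv_apply,
    mul_comm (d _)⁻¹, hd]

theorem IsHermitian.mul_moorePenrose_mul_self {p : ℕ} {B : Matrix (Fin p) (Fin p) ℂ}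
    (hB : B.IsHermitian) : B * moorePenrose B * B = B := by
  rw [moorePenrose, dif_pos hB.exists_penrose]
  exact hB.exists_penrose.choose_spec.1

theorem mul_mul_conjTranspose_mul_self_eq_self {A : Matrix n m 𝕜} {X : Matrix m m 𝕜}
    (h : Aᴴ * A * X * (Aᴴ * A) = Aᴴ * A) : A * X * (Aᴴ * A) = A := by
  have h0 : Aᴴ * A * (X * (Aᴴ * A) - 1) = 0 := by
    rw [Matrix.mul_sub, ← Matrix.mul_assoc, h, Matrix.mul_one, sub_self]
  rwa [conjTranspose_mul_self_mul_eq_zero, Matrix.mul_sub, Matrix.mul_one, sub_eq_zero,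
    ← Matrix.mul_assoc] at h0

open scoped MatrixOrder in
theorem PosSemidef.submatrix_id_mul_mul_submatrix [DecidableEq n] {C : Matrix n n 𝕜}
    (hC : C.PosSemidef) (f : m → n) {X : Matrix m m 𝕜}
    (hX : C.submatrix f f * X * C.submatrix f f = C.submatrix f f) :
    C.submatrix id f * X * C.submatrix f f = C.submatrix id f := by
  obtain ⟨D, rfl⟩ := CStarAlgebra.nonneg_iff_eq_star_mul_self.mp hC.nonneg
  set A := D.submatrix id f
  have hid : (star D * D).submatrix id f = Dᴴ * A := by
    rw [submatrix_mul _ _ _ _ _ Function.bijective_id, submatrix_id_id, star_eq_conjTranspose]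
  have hff : (star D * D).submatrix f f = Aᴴ * A := by
    rw [submatrix_mul _ _ _ _ _ Function.bijective_id, conjTranspose_submatrix,
      star_eq_conjTranspose]
  rw [hff] at hX ⊢
  rw [hid, Matrix.mul_assoc _ X, Matrix.mul_assoc, ← Matrix.mul_assoc _ X,
    mul_mul_conjTranspose_mul_self_eq_self hX]

theorem PosSemidef.sub_inv_smul_mul_single_mul {B : Matrix m m 𝕜} (hB : B.PosSemidef) (k : m) :
    (B - (B k k)⁻¹ • (B * single k k 1 * B)).PosSemidef := by
  set c := (B k k)⁻¹
  have hc : star c = c := by rw [star_inv₀, hB.isHermitian.apply k k]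
  have hEBE : single k k (1 : 𝕜) * B * single k k 1 = B k k • single k k 1 := by
    rw [single_mul_mul_single, one_mul, mul_one, smul_single, smul_eq_mul, mul_one]
  -- also when `B k k = 0`, where `c = 0`
  have hc' : c * (c * B k k) = c := by
    rcases eq_or_ne (B k k) 0 with h | h
    · simp [c, h]
    · rw [inv_mul_cancel₀ h, mul_one]
  convert hB.conjTranspose_mul_mul_same (1 - c • (single k k 1 * B)) using 1
  rw [conjTranspose_sub, conjTranspose_one, conjTranspose_smul, conjTranspose_mul, hc,
    hB.isHermitian.eq, conjTranspose_single, star_one]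
  simp only [Matrix.sub_mul, Matrix.mul_sub, Matrix.one_mul, Matrix.mul_one, Matrix.smul_mul,
    Matrix.mul_smul, Matrix.mul_assoc]
  rw [← Matrix.mul_assoc (single k k 1) B, ← Matrix.mul_assoc (single k k 1 * B), hEBE]
  simp only [Matrix.smul_mul, Matrix.mul_smul, smul_sub, smul_smul, hc', sub_self,
    sub_zero]

theorem PosSemidef.mul_mul_conjTranspose_sub_inv_smul {B X : Matrix m m 𝕜} {L : Matrix n m 𝕜}
    (hB : B.PosSemidef) (hL : L * X * B = L) (k : m) :
    (L * X * Lᴴ - (B k k)⁻¹ • (L * single k k (1 : 𝕜) * Lᴴ)).PosSemidef := by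
  have hLH : B * (Xᴴ * Lᴴ) = Lᴴ := by
    rw [← hB.isHermitian.eq, ← conjTranspose_mul, ← conjTranspose_mul, hL]
  have hLE : L * (X * (B * (single k k (1 : 𝕜) * Lᴴ))) = L * (single k k (1 : 𝕜) * Lᴴ) := by
    rw [← Matrix.mul_assoc, ← Matrix.mul_assoc, hL]
  convert (hB.sub_inv_smul_mul_single_mul k).mul_mul_conjTranspose_same (L * X) using 1
  simp only [conjTranspose_mul, Matrix.mul_sub, Matrix.sub_mul, Matrix.mul_smul, Matrix.smul_mul,
    Matrix.mul_assoc, hLH, hLE]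

theorem PosSemidef.sum_norm_sq_div_le_re_trace {B X : Matrix m m 𝕜} {L : Matrix n m 𝕜}
    (hB : B.PosSemidef) (hL : L * X * B = L) (k : m) :
    (∑ a, ‖L a k‖ ^ 2) / RCLike.re (B k k) ≤ RCLike.re (trace (L * X * Lᴴ)) := by
  have htr : trace (L * single k k (1 : 𝕜) * Lᴴ) = ((∑ a, ‖L a k‖ ^ 2 : ℝ) : 𝕜) := by
    rw [trace_mul_cycle, trace_mul_single, MulOpposite.op_one, one_smul, mul_apply]
    simp [RCLike.conj_mul]
  have hBkk : B k k = (RCLike.re (B k k) : 𝕜) := (hB.isHermitian.coe_re_apply_self k).symm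
  have hnonneg :=
    (RCLike.nonneg_iff.mp (hB.mul_mul_conjTranspose_sub_inv_smul hL k).trace_nonneg).1
  rw [trace_sub, trace_smul, htr, hBkk, smul_eq_mul, ← RCLike.ofReal_inv, ← RCLike.ofReal_mul,
    map_sub, RCLike.ofReal_re] at hnonneg
  rw [div_eq_inv_mul]
  linarith

end Matrix

theorem trace_srpluK_ge_general {n : ℕ} (C : Matrix (Fin n) (Fin n) ℂ) (hC : C.PosSemidef)
    (i j : Fin n) :
    (∑ a, ‖C a i‖ ^ 2) / (C i i).re ≤ (Matrix.trace (srpluK C i j)).re := by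
  have hB := hC.submatrix ![i, j]
  have hL := hC.submatrix_id_mul_mul_submatrix ![i, j] hB.isHermitian.mul_moorePenrose_mul_self
  simpa [srpluK] using hB.sum_norm_sq_div_le_re_trace hL 0

/-- **Theorem.**  For a PSD matrix `C ∈ ℂ^{n×n}` and indices `(i,j)` with `C_{ii} ≠ 0`,
the rank-2 correction satisfies `tr(K_{ij}) ≥ ‖C e_i‖₂² / C_{ii}`. -/
theorem trace_srpluK_ge {n : ℕ} (C : Matrix (Fin n) (Fin n) ℂ) (hC : C.PosSemidef)
    (i j : Fin n) (hCii : C i i ≠ 0) :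
    (∑ a, ‖C a i‖ ^ 2) / (C i i).re ≤ (Matrix.trace (srpluK C i j)).re :=
  trace_srpluK_ge_general C hC i j
end

section
/- Define Φ(C) = C − C²/tr(C) for nonzero positive semidefinite C ∈ ℂ^{n×n}, and let Φ^{∘k} denote k-fold composition. For any positive semidefinite matrix C of rank r ≥ 2, the limit lim_{k→∞} tr(Φ^{∘(k+1)}(C)) / tr(Φ^{∘k}(C)) exists and equals 1 − 1/r. -/
/-!
Diagonalising `C` by a unitary, `Φ` acts on the eigenvalues `w` by `wᵢ ↦ wᵢ (s - wᵢ) / s` with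
`s = ∑ w`, and the trace ratio is `1 - ∑ w² / s²`. Cauchy–Schwarz on the `r` nonzero eigenvalues
bounds it above by `1 - 1/r`. Below, it is at least `(r - 1) μ`, where `μ` is the smallest share
`wᵢ / s` of a nonzero eigenvalue; by concavity of `x (s - x)` that share improves at least as
`μ ↦ μ (1 + 1/r - μ)`, whose iterates increase to `1/r`.
-/

open Matrix Filter
open scoped ComplexOrder Topology

/-- The map `Φ(C) = C − C²/tr(C)` (with the junk value `C − 0⁻¹ • C² ` irrelevant here,
since `tr(C) ≠ 0` along the iteration for a nonzero PSD matrix of rank ≥ 2). -/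
noncomputable def PhiMap {n : ℕ} (C : Matrix (Fin n) (Fin n) ℂ) :
    Matrix (Fin n) (Fin n) ℂ :=
  C - (Matrix.trace C)⁻¹ • (C * C)

open Finset

noncomputable def phiDiag {ι : Type*} [Fintype ι] (w : ι → ℝ) : ι → ℝ :=
  fun i => w i - (∑ j, w j)⁻¹ * w i ^ 2

theorem tendsto_of_mul_one_add_sub_le {x : ℕ → ℝ} {c : ℝ} (h₀ : 0 < x 0) (hle : ∀ k, x k ≤ c)
    (hstep : ∀ k, x k * (1 + c - x k) ≤ x (k + 1)) : Tendsto x atTop (𝓝 c) := by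
  have hpos : ∀ k, 0 < x k := by
    intro k
    induction k with
    | zero => exact h₀
    | succ k ih => nlinarith [hstep k, hle k]
  have hmono : Monotone x :=
    monotone_nat_of_le_succ fun k => by nlinarith [hstep k, hle k, hpos k]
  obtain ⟨L, hL⟩ : ∃ L, Tendsto x atTop (𝓝 L) :=
    ⟨_, tendsto_atTop_ciSup hmono ⟨c, Set.forall_mem_range.2 hle⟩⟩
  have hLc : L ≤ c := le_of_tendsto' hL hle
  have hL₀ : x 0 ≤ L := hmono.ge_of_tendsto hL 0
  have hfix : L * (1 + c - L) ≤ L :=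
    le_of_tendsto_of_tendsto' (hL.mul (tendsto_const_nhds.sub hL))
      (hL.comp (tendsto_add_atTop_nat 1)) hstep
  -- `L ≥ x 0 > 0`, so `L (c - L) ≤ 0` forces `L ≥ c`
  obtain rfl : L = c := by nlinarith
  exact hL

section Weights

variable {ι : Type*} [Fintype ι]

theorem sum_phiDiag (w : ι → ℝ) :
    ∑ i, phiDiag w i = (∑ i, w i) * (1 - (∑ i, w i ^ 2) / (∑ i, w i) ^ 2) := by
  simp only [phiDiag, sum_sub_distrib, ← mul_sum]
  rcases eq_or_ne (∑ i, w i) 0 with h | h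
  · simp [h]
  · field_simp

theorem phiDiag_apply {w : ι → ℝ} (hw : ∑ j, w j ≠ 0) (i : ι) :
    phiDiag w i = w i * (∑ j, w j - w i) / ∑ j, w j := by
  rw [phiDiag]
  field_simp

variable {S : Finset ι} {w : ι → ℝ}

theorem inv_card_le_sum_sq_div_sq (hzero : ∀ i ∉ S, w i = 0) (hw : ∑ i, w i ≠ 0) :
    (#S : ℝ)⁻¹ ≤ (∑ i, w i ^ 2) / (∑ i, w i) ^ 2 := by
  have hsum : ∑ i ∈ S, w i = ∑ i, w i :=
    sum_subset (subset_univ S) fun i _ hi => hzero i hi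
  have hsq : ∑ i ∈ S, w i ^ 2 = ∑ i, w i ^ 2 :=
    sum_subset (subset_univ S) fun i _ hi => by simp [hzero i hi]
  have hcs := sq_sum_le_card_mul_sum_sq (s := S) (f := w)
  rw [hsum, hsq] at hcs
  have hcard : (0 : ℝ) < #S := by
    simpa using nonempty_of_sum_ne_zero (hsum.trans_ne hw)
  rw [inv_eq_one_div, div_le_div_iff₀ hcard (by positivity)]
  linarith

structure HasMinShareOn (S : Finset ι) (μ : ℝ) (w : ι → ℝ) : Prop where
  sum_pos : 0 < ∑ i, w i
  eq_zero : ∀ i ∉ S, w i = 0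
  le_apply : ∀ i ∈ S, μ * ∑ j, w j ≤ w i

theorem exists_hasMinShareOn (hw : ∀ i, 0 ≤ w i) (hS : ({i | w i ≠ 0} : Finset ι).Nonempty) :
    ∃ μ > 0, HasMinShareOn {i | w i ≠ 0} μ w := by
  have hpos : ∀ i ∈ ({i | w i ≠ 0} : Finset ι), 0 < w i := fun i hi =>
    (hw i).lt_of_ne (by simpa [eq_comm] using hi)
  obtain ⟨i₀, hi₀⟩ := id hS
  have hsum : 0 < ∑ i, w i := sum_pos' (fun i _ => hw i) ⟨i₀, mem_univ _, hpos i₀ hi₀⟩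
  refine ⟨_ / ∑ i, w i, div_pos ((lt_inf'_iff hS).2 hpos) hsum, hsum, by simp, fun i hi => ?_⟩
  rw [div_mul_cancel₀ _ hsum.ne']
  exact inf'_le w hi

namespace HasMinShareOn

variable {μ : ℝ}

theorem sum_eq (h : HasMinShareOn S μ w) : ∑ i ∈ S, w i = ∑ i, w i :=
  sum_subset (subset_univ S) fun i _ hi => h.eq_zero i hi

theorem le_inv_card (h : HasMinShareOn S μ w) : μ ≤ (#S : ℝ)⁻¹ := by
  have := card_nsmul_le_sum S w _ h.le_apply
  rw [nsmul_eq_mul, h.sum_eq] at this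
  have hS : (0 : ℝ) < #S := by
    simpa using nonempty_of_sum_ne_zero (h.sum_eq.trans_ne h.sum_pos.ne')
  rw [← one_div, le_div_iff₀ hS]
  exact le_of_mul_le_mul_right (by linarith) h.sum_pos

theorem apply_add_le (h : HasMinShareOn S μ w) {i : ι} (hi : i ∈ S) :
    w i + (#S - 1) * (μ * ∑ j, w j) ≤ ∑ j, w j := by
  classical
  have := card_nsmul_le_sum (S.erase i) w _ fun j hj => h.le_apply j (mem_of_mem_erase hj)
  rw [nsmul_eq_mul, cast_card_erase_of_mem hi, sum_erase_eq_sub hi, h.sum_eq] at this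
  linarith

theorem sum_sq_div_sq_le (h : HasMinShareOn S μ w) (hμ : 0 ≤ μ) :
    (∑ i, w i ^ 2) / (∑ i, w i) ^ 2 ≤ 1 - (#S - 1) * μ := by
  set s := ∑ i, w i
  have hsq : ∑ i ∈ S, w i ^ 2 = ∑ i, w i ^ 2 :=
    sum_subset (subset_univ S) fun i _ hi => by simp [h.eq_zero i hi]
  have hbound : ∑ i, w i ^ 2 ≤ (s - (#S - 1) * (μ * s)) * s := calc
    ∑ i, w i ^ 2 = ∑ i ∈ S, w i * w i := by rw [← hsq]; simp only [sq]
    _ ≤ ∑ i ∈ S, (s - (#S - 1) * (μ * s)) * w i := by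
      refine sum_le_sum fun i hi => mul_le_mul_of_nonneg_right ?_ ?_
      · linarith [h.apply_add_le hi]
      · exact (mul_nonneg hμ h.sum_pos.le).trans (h.le_apply i hi)
    _ = (s - (#S - 1) * (μ * s)) * s := by rw [← mul_sum, h.sum_eq]
  rw [div_le_iff₀ (by positivity [h.sum_pos])]
  linarith

theorem mul_one_sub_mul_le_phiDiag (h : HasMinShareOn S μ w) (hμ : 0 ≤ μ) (hS : 2 ≤ #S)
    {i : ι} (hi : i ∈ S) : μ * (1 - μ) * ∑ j, w j ≤ phiDiag w i := by
  set s := ∑ j, w j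
  have hlow := h.le_apply i hi
  have hhigh : w i ≤ s - μ * s := by
    have : (1 : ℝ) ≤ #S - 1 := by
      have : (2 : ℝ) ≤ #S := by exact_mod_cast hS
      linarith
    nlinarith [h.apply_add_le hi, mul_nonneg hμ h.sum_pos.le]
  rw [phiDiag_apply h.sum_pos.ne', le_div_iff₀ h.sum_pos]
  -- `x (s - x)` is concave, so on `[μ s, s - μ s]` it is smallest at the endpoints
  nlinarith [mul_nonneg (sub_nonneg.2 hlow) (sub_nonneg.2 hhigh)]

theorem sum_phiDiag_div_eq (h : HasMinShareOn S μ w) :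
    (∑ i, phiDiag w i) / ∑ i, w i = 1 - (∑ i, w i ^ 2) / (∑ i, w i) ^ 2 := by
  rw [sum_phiDiag, mul_div_cancel_left₀ _ h.sum_pos.ne']

theorem sum_phiDiag_div_le (h : HasMinShareOn S μ w) :
    (∑ i, phiDiag w i) / ∑ i, w i ≤ 1 - (#S : ℝ)⁻¹ := by
  rw [h.sum_phiDiag_div_eq]
  linarith [inv_card_le_sum_sq_div_sq h.eq_zero h.sum_pos.ne']

theorem card_sub_one_mul_le_sum_phiDiag_div (h : HasMinShareOn S μ w) (hμ : 0 ≤ μ) :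
    (#S - 1) * μ ≤ (∑ i, phiDiag w i) / ∑ i, w i := by
  rw [h.sum_phiDiag_div_eq]
  linarith [h.sum_sq_div_sq_le hμ]

protected theorem phiDiag (h : HasMinShareOn S μ w) (hμ : 0 < μ) (hS : 2 ≤ #S) :
    HasMinShareOn S (μ * (1 + (#S : ℝ)⁻¹ - μ)) (phiDiag w) := by
  set q := (∑ i, w i ^ 2) / (∑ i, w i) ^ 2
  have hq_low : (#S : ℝ)⁻¹ ≤ q := inv_card_le_sum_sq_div_sq h.eq_zero h.sum_pos.ne'
  have hq_high : q < 1 := by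
    have : (2 : ℝ) ≤ #S := by exact_mod_cast hS
    nlinarith [h.sum_sq_div_sq_le hμ.le]
  have hμS := h.le_inv_card
  have hsum : ∑ i, phiDiag w i = (∑ i, w i) * (1 - q) := sum_phiDiag w
  refine ⟨?_, fun i hi => by simp [phiDiag, h.eq_zero i hi], fun i hi => ?_⟩
  · rw [hsum]
    exact mul_pos h.sum_pos (by linarith)
  · refine le_trans ?_ (h.mul_one_sub_mul_le_phiDiag hμ.le hS hi)
    rw [hsum]
    have : (1 + (#S : ℝ)⁻¹ - μ) * (1 - q) ≤ 1 - μ := by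
      nlinarith [mul_nonneg (by linarith : (0 : ℝ) ≤ 1 + (#S : ℝ)⁻¹ - μ) (sub_nonneg.2 hq_low),
        mul_nonneg (by positivity : (0 : ℝ) ≤ (#S : ℝ)⁻¹) (sub_nonneg.2 hμS)]
    have := mul_le_mul_of_nonneg_left this (mul_nonneg hμ.le h.sum_pos.le)
    linarith

end HasMinShareOn

theorem tendsto_sum_phiDiag_iterate_div (hw : ∀ i, 0 ≤ w i) (hS : 2 ≤ #{i | w i ≠ 0}) :
    Tendsto (fun k => (∑ i, phiDiag^[k + 1] w i) / ∑ i, phiDiag^[k] w i) atTop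
      (𝓝 (1 - (#{i | w i ≠ 0} : ℝ)⁻¹)) := by
  set S : Finset ι := {i | w i ≠ 0}
  obtain ⟨μ, hμ, h⟩ := exists_hasMinShareOn hw (card_pos.1 (two_pos.trans_le hS))
  set g : ℝ → ℝ := fun x => x * (1 + (#S : ℝ)⁻¹ - x)
  have hiter : ∀ k, 0 < g^[k] μ ∧ HasMinShareOn S (g^[k] μ) (phiDiag^[k] w) := by
    intro k
    induction k with
    | zero => exact ⟨hμ, h⟩
    | succ k ih =>
      rw [Function.iterate_succ_apply', Function.iterate_succ_apply']
      have : (0 : ℝ) ≤ (#S : ℝ)⁻¹ := by positivity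
      exact ⟨mul_pos ih.1 (by linarith [ih.2.le_inv_card]), ih.2.phiDiag ih.1 hS⟩
  have hμlim : Tendsto (fun k => g^[k] μ) atTop (𝓝 (#S : ℝ)⁻¹) :=
    tendsto_of_mul_one_add_sub_le hμ (fun k => (hiter k).2.le_inv_card)
      (fun k => (Function.iterate_succ_apply' g k μ).ge)
  have hlow : Tendsto (fun k => (#S - 1) * g^[k] μ) atTop (𝓝 (1 - (#S : ℝ)⁻¹)) := by
    convert hμlim.const_mul ((#S : ℝ) - 1) using 2
    field_simp
  refine tendsto_of_tendsto_of_tendsto_of_le_of_le hlow tendsto_const_nhds (fun k => ?_)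
    (fun k => ?_)
  · rw [Function.iterate_succ_apply']
    exact (hiter k).2.card_sub_one_mul_le_sum_phiDiag_div (hiter k).1.le
  · rw [Function.iterate_succ_apply']
    exact (hiter k).2.sum_phiDiag_div_le

end Weights

theorem PhiMap_map {n : ℕ} {F : Type*}
    [FunLike F (Matrix (Fin n) (Fin n) ℂ) (Matrix (Fin n) (Fin n) ℂ)]
    [AlgHomClass F ℂ (Matrix (Fin n) (Fin n) ℂ) (Matrix (Fin n) (Fin n) ℂ)] (f : F)
    (hf : ∀ A, trace (f A) = trace A) (A : Matrix (Fin n) (Fin n) ℂ) :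
    PhiMap (f A) = f (PhiMap A) := by
  simp only [PhiMap, map_sub, map_smul, map_mul, hf]

theorem PhiMap_diagonal {n : ℕ} (w : Fin n → ℝ) :
    PhiMap (diagonal (RCLike.ofReal ∘ w)) = diagonal (RCLike.ofReal ∘ phiDiag w) := by
  ext i j
  rcases eq_or_ne i j with rfl | hij
  · simp [PhiMap, phiDiag, trace_diagonal, sq]
  · simp [PhiMap, hij]

theorem trace_conjStarAlgAut {n : ℕ} (U : unitary (Matrix (Fin n) (Fin n) ℂ))
    (A : Matrix (Fin n) (Fin n) ℂ) : trace (Unitary.conjStarAlgAut ℂ _ U A) = trace A := by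
  rw [Unitary.conjStarAlgAut_apply, trace_mul_cycle, Unitary.coe_star_mul_self, one_mul]

theorem Matrix.IsHermitian.trace_PhiMap_iterate {n : ℕ} {A : Matrix (Fin n) (Fin n) ℂ}
    (hA : A.IsHermitian) (k : ℕ) :
    trace (PhiMap^[k] A) = ((∑ i, phiDiag^[k] hA.eigenvalues i : ℝ) : ℂ) := by
  have hconj :
      Function.Semiconj (Unitary.conjStarAlgAut ℂ _ hA.eigenvectorUnitary) PhiMap PhiMap :=
    fun B => (PhiMap_map _ (trace_conjStarAlgAut _) B).symm
  have hdiag :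
      Function.Semiconj (fun w : Fin n → ℝ => diagonal (RCLike.ofReal ∘ w)) phiDiag PhiMap :=
    fun w => (PhiMap_diagonal w).symm
  conv_lhs => rw [hA.spectral_theorem]
  rw [← (hconj.iterate_right k).eq, trace_conjStarAlgAut, ← (hdiag.iterate_right k).eq,
    trace_diagonal]
  simp

/-- **Theorem (asymptotic trace ratio of the Φ-dynamics).**
For any PSD matrix `C ∈ ℂ^{n×n}` of rank `r ≥ 2`,
`lim_{k→∞} tr(Φ^{∘(k+1)}(C)) / tr(Φ^{∘k}(C)) = 1 − 1/r`. -/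
theorem trace_ratio_tendsto {n : ℕ} (C : Matrix (Fin n) (Fin n) ℂ)
    (hC : C.PosSemidef) (r : ℕ) (hrank : C.rank = r) (hr : 2 ≤ r) :
    Tendsto
      (fun k : ℕ =>
        (Matrix.trace (PhiMap^[k + 1] C)).re / (Matrix.trace (PhiMap^[k] C)).re)
      atTop (𝓝 (1 - 1 / (r : ℝ))) := by
  have hcard : #{i | hC.1.eigenvalues i ≠ 0} = r := by
    rw [← hrank, hC.1.rank_eq_card_non_zero_eigs, Fintype.card_subtype]
  have h := tendsto_sum_phiDiag_iterate_div hC.eigenvalues_nonneg (hcard ▸ hr)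
  rw [hcard, ← one_div] at h
  simpa only [hC.1.trace_PhiMap_iterate, Complex.ofReal_re] using h
end

section
/- Let A ∈ ℂ^{n×m}, let X = diag(x_1,…,x_n) and Y = diag(y_1,…,y_m) be diagonal matrices, and let G ∈ ℂ^{n×p}, B ∈ ℂ^{p×m} satisfy the Sylvester displacement equation X A − A Y = G B. Let (i,j) be a pivot with A_{ij} ≠ 0, and define the Schur complement A^{(1)} = A − (1/A_{ij}) A_{:,j} A_{i,:} and the updated generators G^{(1)} = G − (1/A_{ij}) A_{:,j} G_{i,:} and B^{(1)} = B − (1/A_{ij}) B_{:,j} A_{i,:}. Then X A^{(1)} − A^{(1)} Y = G^{(1)} B^{(1)}. In particular, the Schur complement of a Cauchy-like matrix is Cauchy-like with displacement rank at most p. -/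
/-!
The Sylvester displacement `∇_{x,y} M = diag x * M - M * diag y` obeys the Leibniz rule
`∇_{x,y} (M N) = ∇_{x,z} M * N + M * ∇_{z,y} N`, and `∇_{y,x} (e_j e_iᵀ) = (y_j - x_i) e_j e_iᵀ`.
Hence, with `E = e_j e_iᵀ` and `∇ A = G B`,
`∇ (A E A) = G B E A + (y_j - x_i) A E A + A E G B`.
Expanding `(G - c A E G)(B - c B E A)` with `c = A_ij⁻¹` produces the same terms: the only
quadratic one is `c² A E (G B) E A = c² (G B)_ij A E A`, and `(G B)_ij = (x_i - y_j) A_ij`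
together with `c A_ij c = c` turns it into `c (x_i - y_j) A E A`.
-/

open Matrix

namespace Matrix

variable {l m n R : Type*} [DecidableEq l] [DecidableEq m] [Fintype l] [Fintype m]

def displacement [Ring R] (x : l → R) (y : m → R) (M : Matrix l m R) : Matrix l m R :=
  diagonal x * M - M * diagonal y

section Ring

variable [Ring R]

theorem displacement_mul [Fintype n] [DecidableEq n] (x : l → R) (z : n → R) (y : m → R)
    (M : Matrix l n R) (N : Matrix n m R) :
    displacement x y (M * N) = displacement x z M * N + M * displacement z y N := by
  simp only [displacement, Matrix.sub_mul, Matrix.mul_sub, Matrix.mul_assoc]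
  abel

theorem displacement_sub (x : l → R) (y : m → R) (M N : Matrix l m R) :
    displacement x y (M - N) = displacement x y M - displacement x y N := by
  simp only [displacement, Matrix.sub_mul, Matrix.mul_sub]
  abel

theorem displacement_apply (x : l → R) (y : m → R) (M : Matrix l m R) (i : l) (j : m) :
    displacement x y M i j = x i * M i j - M i j * y j := by
  rw [displacement, Matrix.sub_apply, diagonal_mul, mul_diagonal]

theorem displacement_single (x : l → R) (y : m → R) (j : m) (i : l) (c : R) :
    displacement y x (single j i c) = single j i (y j * c - c * x i) := by
  ext a b
  simp only [displacement, Matrix.sub_apply, diagonal_mul, mul_diagonal, single_apply]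
  split_ifs with h
  · rw [h.1, h.2]
  · simp

end Ring

section CommRing

variable [CommRing R]

theorem displacement_smul (x : l → R) (y : m → R) (c : R) (M : Matrix l m R) :
    displacement x y (c • M) = c • displacement x y M := by
  rw [displacement, displacement, Matrix.mul_smul, Matrix.smul_mul, smul_sub]

theorem displacement_mul_single_mul (x : l → R) (y : m → R) (A : Matrix l m R) (i : l) (j : m) :
    displacement x y (A * single j i (1 : R) * A) =
      displacement x y A * single j i (1 : R) * A + (y j - x i) • (A * single j i (1 : R) * A) +
        A * single j i (1 : R) * displacement x y A := by
  have hE : single j i (y j * 1 - 1 * x i) = (y j - x i) • single j i (1 : R) := by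
    simp only [smul_single, smul_eq_mul, mul_one, one_mul]
  rw [displacement_mul x x y, displacement_mul x y x, displacement_single, hE, Matrix.add_mul,
    Matrix.mul_smul, Matrix.smul_mul]

theorem mul_single_mul_mul_single_mul {o r : Type*} (P : Matrix o m R) (M : Matrix l m R)
    (N : Matrix l r R) (i : l) (j : m) :
    P * single j i (1 : R) * M * single j i (1 : R) * N =
      M i j • (P * single j i (1 : R) * N) := by
  have hsingle : single j i (1 * M i j * 1) = M i j • single j i (1 : R) := by
    rw [smul_single, smul_eq_mul, one_mul]
  rw [Matrix.mul_assoc P, Matrix.mul_assoc P, single_mul_mul_single, hsingle, Matrix.mul_smul,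
    Matrix.smul_mul]

end CommRing

theorem displacement_schurComplement {K : Type*} [Field K] [Fintype n] (x : l → K) (y : m → K)
    (A : Matrix l m K) (G : Matrix l n K) (B : Matrix n m K)
    (hdisp : displacement x y A = G * B) (i : l) (j : m) :
    displacement x y (A - (A i j)⁻¹ • (A * single j i (1 : K) * A)) =
      (G - (A i j)⁻¹ • (A * single j i (1 : K) * G)) *
        (B - (A i j)⁻¹ • (B * single j i (1 : K) * A)) := by
  have hpivot : (A i j)⁻¹ * A i j * (A i j)⁻¹ = (A i j)⁻¹ := by
    simpa using mul_inv_mul_cancel (A i j)⁻¹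
  set c := (A i j)⁻¹
  set E := single j i (1 : K)
  have hcorner : A * E * (G * B) * E * A = ((x i - y j) * A i j) • (A * E * A) := by
    rw [mul_single_mul_mul_single_mul, ← hdisp, displacement_apply, sub_mul, mul_comm (A i j)]
  have hcoef : c * c * ((x i - y j) * A i j) = c * (x i - y j) := by
    linear_combination (x i - y j) * hpivot
  calc displacement x y (A - c • (A * E * A))
      = G * B - c • (G * B * E * A + (y j - x i) • (A * E * A) + A * E * (G * B)) := by
        rw [displacement_sub, displacement_smul, displacement_mul_single_mul, hdisp]
    _ = G * B - c • (G * B * E * A) - c • (A * E * (G * B)) +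
          (c * c) • (A * E * (G * B) * E * A) := by
        rw [hcorner, smul_smul, hcoef]
        module
    _ = (G - c • (A * E * G)) * (B - c • (B * E * A)) := by
        simp only [Matrix.sub_mul, Matrix.mul_sub, Matrix.smul_mul, Matrix.mul_smul,
          Matrix.mul_assoc]
        module

end Matrix

theorem cauchyLike_schur_complement_general {n m p : ℕ}
    (A : Matrix (Fin n) (Fin m) ℂ) (x : Fin n → ℂ) (y : Fin m → ℂ)
    (G : Matrix (Fin n) (Fin p) ℂ) (B : Matrix (Fin p) (Fin m) ℂ)
    (hdisp : Matrix.diagonal x * A - A * Matrix.diagonal y = G * B)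
    (i : Fin n) (j : Fin m) :
    Matrix.diagonal x *
        (A - (A i j)⁻¹ • (A * Matrix.single j i (1 : ℂ) * A)) -
      (A - (A i j)⁻¹ • (A * Matrix.single j i (1 : ℂ) * A)) * Matrix.diagonal y
    = (G - (A i j)⁻¹ • (A * Matrix.single j i (1 : ℂ) * G)) *
        (B - (A i j)⁻¹ • (B * Matrix.single j i (1 : ℂ) * A)) :=
  displacement_schurComplement x y A G B hdisp i j

/-- **Theorem (Schur complements of Cauchy-like matrices are Cauchy-like).**
Suppose `X A − A Y = G B` with `X = diag(x)`, `Y = diag(y)`, `G ∈ ℂ^{n×p}`, `B ∈ ℂ^{p×m}`,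
and let `(i,j)` be a pivot with `A_{ij} ≠ 0`.  With
`A¹ = A − A_{ij}⁻¹ A_{:,j} A_{i,:}`, `G¹ = G − A_{ij}⁻¹ A_{:,j} G_{i,:}`,
`B¹ = B − A_{ij}⁻¹ B_{:,j} A_{i,:}` (written via `e_j e_iᵀ = stdBasisMatrix j i 1`),
one has `X A¹ − A¹ Y = G¹ B¹`; in particular the Schur complement is Cauchy-like with
displacement rank at most `p`. -/
theorem cauchyLike_schur_complement {n m p : ℕ}
    (A : Matrix (Fin n) (Fin m) ℂ) (x : Fin n → ℂ) (y : Fin m → ℂ)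
    (G : Matrix (Fin n) (Fin p) ℂ) (B : Matrix (Fin p) (Fin m) ℂ)
    (hdisp : Matrix.diagonal x * A - A * Matrix.diagonal y = G * B)
    (i : Fin n) (j : Fin m) (hpiv : A i j ≠ 0) :
    Matrix.diagonal x *
        (A - (A i j)⁻¹ • (A * Matrix.single j i (1 : ℂ) * A)) -
      (A - (A i j)⁻¹ • (A * Matrix.single j i (1 : ℂ) * A)) * Matrix.diagonal y
    = (G - (A i j)⁻¹ • (A * Matrix.single j i (1 : ℂ) * G)) *
        (B - (A i j)⁻¹ • (B * Matrix.single j i (1 : ℂ) * A)) :=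
  cauchyLike_schur_complement_general A x y G B hdisp i j
end

section
/- Let x_1,…,x_m ∈ ℂ satisfy x_j^n ≠ 1 for all j, and let V ∈ ℂ^{m×n} be the Vandermonde matrix V_{jk} = x_j^{k−1}. Let ω = exp(2πi/n), let F ∈ ℂ^{n×n} be the unitary matrix with F_{jk} = ω^{j(2k−1)}/√n, which diagonalizes the cyclic shift Q = F* Λ F with Λ = diag(ω², ω⁴, …, ω^{2n}), let g ∈ ℂ^m with g_j = x_j^n − 1, and let C ∈ ℂ^{m×n} be the Cauchy matrix with C_{jk} = 1/(x_j − λ_k), where λ_k = ω^{2k} are the eigenvalues of Q. Then V = diag(g) · C · diag(e_n^T F*) · F. -/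
open Matrix

/-- `ω = exp(2πi/n)`. -/
noncomputable def omegaN (n : ℕ) : ℂ :=
  Complex.exp (2 * Real.pi * Complex.I / n)

/-- The matrix `F ∈ ℂ^{n×n}` with `F_{jk} = ω^{j(2k−1)}/√n` (1-based indices). -/
noncomputable def dftF (n : ℕ) : Matrix (Fin n) (Fin n) ℂ :=
  Matrix.of fun j k =>
    omegaN n ^ (((j : ℕ) + 1) * (2 * ((k : ℕ) + 1) - 1)) / (Real.sqrt n : ℂ)

/-- The cyclic shift permutation matrix `Q ∈ ℂ^{n×n}`, with a `1` in position `(a,b)` iff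
`a ≡ b+1 (mod n)`, so that `(V Q)_{:,k} = V_{:,k+1 (mod n)}`. -/
def cyclicShift (n : ℕ) : Matrix (Fin n) (Fin n) ℂ :=
  Matrix.of fun a b => if (a : ℕ) = ((b : ℕ) + 1) % n then 1 else 0

/-- The eigenvalues `λ_k = ω^{2k}` (1-based) of the cyclic shift. -/
noncomputable def lamQ (n : ℕ) : Fin n → ℂ := fun k => omegaN n ^ (2 * ((k : ℕ) + 1))

/-- **Theorem (Vandermonde–Cauchy factorization).**
Let `x_1,…,x_m ∈ ℂ` with `x_jⁿ ≠ 1`, let `V ∈ ℂ^{m×n}` be the Vandermonde matrix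
`V_{jk} = x_j^{k−1}`, let `ω = exp(2πi/n)`, let `F` (with `F_{jk} = ω^{j(2k−1)}/√n`) be the
unitary matrix diagonalizing the cyclic shift `Q = FᴴΛF`, `Λ = diag(ω²,…,ω^{2n})`, let
`g_j = x_jⁿ − 1`, and let `C` be the Cauchy matrix `C_{jk} = 1/(x_j − ω^{2k})`.
Then `V = diag(g) · C · diag(e_nᵀ Fᴴ) · F`. -/
theorem vandermonde_cauchy_factorization {m n : ℕ} (hn : 0 < n) (x : Fin m → ℂ)
    (hx : ∀ j, x j ^ n ≠ 1)
    (hFunitary : dftF n ∈ Matrix.unitaryGroup (Fin n) ℂ)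
    (hQdiag : cyclicShift n = (dftF n)ᴴ * Matrix.diagonal (lamQ n) * dftF n) :
    (Matrix.of fun (j : Fin m) (k : Fin n) => x j ^ (k : ℕ))
      = Matrix.diagonal (fun j => x j ^ n - 1) *
          (Matrix.of fun (j : Fin m) (k : Fin n) => (x j - lamQ n k)⁻¹) *
          Matrix.diagonal (fun k => (dftF n)ᴴ ⟨n - 1, Nat.sub_lt hn Nat.one_pos⟩ k) *
          dftF n := by
  set L : Fin n := ⟨n - 1, Nat.sub_lt hn Nat.one_pos⟩ with hLdef
  set V : Matrix (Fin m) (Fin n) ℂ :=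
    Matrix.of fun (j : Fin m) (k : Fin n) => x j ^ (k : ℕ) with hVdef
  set E : Matrix (Fin m) (Fin n) ℂ :=
    Matrix.of fun (_ : Fin m) (k : Fin n) => if k = L then (1 : ℂ) else 0 with hEdef
  -- unitarity of F
  have hFF : dftF n * (dftF n)ᴴ = 1 := by
    have := hFunitary.2
    rwa [Matrix.star_eq_conjTranspose] at this
  have hFF' : (dftF n)ᴴ * dftF n = 1 := by
    have := hFunitary.1
    rwa [Matrix.star_eq_conjTranspose] at this
  -- ω^n = 1
  have homega : omegaN n ^ n = 1 := by
    rw [omegaN, ← Complex.exp_nat_mul]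
    have hn0 : (n : ℂ) ≠ 0 := Nat.cast_ne_zero.mpr hn.ne'
    rw [show (n : ℂ) * (2 * Real.pi * Complex.I / n) = 2 * Real.pi * Complex.I by
      field_simp]
    exact Complex.exp_two_pi_mul_I
  have hlam : ∀ k : Fin n, lamQ n k ^ n = 1 := by
    intro k
    rw [lamQ, ← pow_mul, mul_comm, pow_mul, homega, one_pow]
  have hne : ∀ (j : Fin m) (k : Fin n), x j - lamQ n k ≠ 0 := by
    intro j k
    refine sub_ne_zero.mpr fun h => hx j ?_
    rw [h, hlam]
  -- the shift identity V Q = diag(x) V - diag(g) E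
  have step : V * cyclicShift n = Matrix.diagonal x * V -
      Matrix.diagonal (fun j => x j ^ n - 1) * E := by
    ext j b
    have hb : (b : ℕ) + 1 ≤ n := b.isLt
    have hlhs : (V * cyclicShift n) j b = x j ^ (((b : ℕ) + 1) % n) := by
      rw [Matrix.mul_apply]
      rw [Finset.sum_eq_single (⟨((b : ℕ) + 1) % n, Nat.mod_lt _ hn⟩ : Fin n)]
      · simp [hVdef, cyclicShift]
      · intro a _ ha
        have h2 : (a : ℕ) ≠ ((b : ℕ) + 1) % n := fun h => ha (Fin.ext h)
        simp [cyclicShift, h2]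
      · intro h; exact absurd (Finset.mem_univ _) h
    rw [hlhs]
    simp only [Matrix.sub_apply, Matrix.diagonal_mul, hVdef, hEdef, Matrix.of_apply]
    rcases eq_or_lt_of_le hb with h | h
    · have hbL : b = L := Fin.ext (by simp [hLdef]; omega)
      rw [hbL, if_pos rfl]
      have hm0 : ((L : ℕ) + 1) % n = 0 := by
        rw [show (L : ℕ) + 1 = n by rw [← hbL]; exact h, Nat.mod_self]
      rw [hm0]
      have hpow : x j * x j ^ (L : ℕ) = x j ^ n := by
        rw [← pow_succ', show (L : ℕ) + 1 = n by rw [← hbL]; exact h]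
      rw [pow_zero, hpow]; ring
    · have hmod : ((b : ℕ) + 1) % n = (b : ℕ) + 1 := Nat.mod_eq_of_lt h
      have hbL : b ≠ L := by
        intro hb'
        have : (b : ℕ) = n - 1 := by rw [hb']
        omega
      rw [hmod, if_neg hbL, pow_succ']; ring
  -- conjugate by Fᴴ
  have h2 : V * cyclicShift n * (dftF n)ᴴ = V * (dftF n)ᴴ * Matrix.diagonal (lamQ n) := by
    rw [hQdiag]
    simp only [Matrix.mul_assoc, hFF, Matrix.mul_one]
  have step2 : V * (dftF n)ᴴ * Matrix.diagonal (lamQ n) =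
      Matrix.diagonal x * (V * (dftF n)ᴴ) -
        Matrix.diagonal (fun j => x j ^ n - 1) * (E * (dftF n)ᴴ) := by
    rw [← h2, step, Matrix.sub_mul, Matrix.mul_assoc, Matrix.mul_assoc]
  have hEF : ∀ (j : Fin m) (k : Fin n), (E * (dftF n)ᴴ) j k = (dftF n)ᴴ L k := by
    intro j k
    simp [Matrix.mul_apply, hEdef, ite_mul]
  -- solve for V Fᴴ entrywise
  have key : V * (dftF n)ᴴ = Matrix.diagonal (fun j => x j ^ n - 1) *
      (Matrix.of fun (j : Fin m) (k : Fin n) => (x j - lamQ n k)⁻¹) *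
      Matrix.diagonal (fun k => (dftF n)ᴴ L k) := by
    ext j k
    have hrel := congrFun (congrFun step2 j) k
    simp only [Matrix.mul_diagonal, Matrix.sub_apply, Matrix.diagonal_mul, hEF] at hrel
    have hmain : (x j - lamQ n k) * ((V * (dftF n)ᴴ) j k)
        = (x j ^ n - 1) * (dftF n)ᴴ L k := by
      rw [sub_mul]; linear_combination -hrel
    simp only [Matrix.mul_diagonal, Matrix.diagonal_mul, Matrix.of_apply]
    apply mul_left_cancel₀ (hne j k)
    rw [hmain]
    rw [show (x j - lamQ n k) * ((x j ^ n - 1) * (x j - lamQ n k)⁻¹ * (dftF n)ᴴ L k)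
        = (x j - lamQ n k) * (x j - lamQ n k)⁻¹ * ((x j ^ n - 1) * (dftF n)ᴴ L k) by ring,
      mul_inv_cancel₀ (hne j k), one_mul]
  calc V = V * ((dftF n)ᴴ * dftF n) := by rw [hFF', Matrix.mul_one]
    _ = V * (dftF n)ᴴ * dftF n := (Matrix.mul_assoc _ _ _).symm
    _ = _ := by rw [key]
end

section
/- Let A ∈ ℂ^{n×m} be nonzero with Gram matrix G = A*A, largest singular value σ_1, and let P be the orthogonal projector onto the span of the top k eigenvectors of G, with P_⊥ = I − P. Fix a column index c with P e_c ≠ 0 and A e_c ≠ 0, and set g = P e_c / ‖P e_c‖₂. For each row index i with A_{ic} ≠ 0, let A^{(1)}(i,c) = A − (1/A_{ic}) A e_c e_i^T A and G^{(1)}(i,c) = A^{(1)}(i,c)* A^{(1)}(i,c). Then Σ_{i: A_{ic} ≠ 0} (|A_{ic}|²/‖A e_c‖₂²) · g* G^{(1)}(i,c) g ≤ 2 σ_1² · ‖A P_⊥ e_c‖₂² / ‖A e_c‖₂². -/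
open Matrix Finset
open scoped InnerProductSpace ComplexConjugate

/-!
Write `x = A e_c`, `y = A g` and `q = A P e_c`. Pivoting on row `i` maps `y` to
`y - (y_i / x_i) x`; averaged over `i ∼ |x_i|² / ‖x‖²` the cross terms add up to
`|⟪x, y⟫|² / ‖x‖²`, so the expectation is at most `2 (‖y‖² - |⟪x, y⟫|² / ‖x‖²)`.
Because `P` is a spectral projector of `AᴴA`, `A P e_c ⟂ A P⊥ e_c`, i.e. `⟪x, q⟫ = ‖q‖²`, and
`‖q‖ ≤ σ₁ ‖P e_c‖`. As `y = q / ‖P e_c‖`, this gives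
`‖y‖² - |⟪x, y⟫|² / ‖x‖² = ‖y‖² ‖x - q‖² / ‖x‖² ≤ σ₁² ‖A P⊥ e_c‖² / ‖x‖²`.
-/

section Pivot
variable {𝕜 ι : Type*} [RCLike 𝕜] [Fintype ι]

lemma ofReal_norm_sq_div_mul_div (z w : 𝕜) (X : ℝ) (hz : z ≠ 0) :
    ((‖z‖ ^ 2 / X : ℝ) : 𝕜) * (w / z) = conj z * w / X := by
  rw [RCLike.ofReal_div, RCLike.ofReal_pow, ← RCLike.conj_mul]
  field_simp

lemma mul_norm_sub_div_smul_sq_eq (x y : EuclideanSpace 𝕜 ι) {i : ι} (hxi : x i ≠ 0) :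
    ‖x i‖ ^ 2 / ‖x‖ ^ 2 * ‖y - (y i / x i) • x‖ ^ 2 =
      ‖x i‖ ^ 2 / ‖x‖ ^ 2 * ‖y‖ ^ 2
        - 2 * RCLike.re (conj (x i) * y i * ⟪y, x⟫_𝕜) / ‖x‖ ^ 2 + ‖y i‖ ^ 2 := by
  have hx : ‖x‖ ≠ 0 := norm_ne_zero_iff.mpr fun h => hxi (by simp [h])
  have hcross : ‖x i‖ ^ 2 / ‖x‖ ^ 2 * RCLike.re (y i / x i * ⟪y, x⟫_𝕜)
      = RCLike.re (conj (x i) * y i * ⟪y, x⟫_𝕜) / ‖x‖ ^ 2 := by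
    rw [← RCLike.re_ofReal_mul, ← mul_assoc, ofReal_norm_sq_div_mul_div _ _ _ hxi,
      div_mul_eq_mul_div, RCLike.div_re_ofReal]
  rw [norm_sub_sq (𝕜 := 𝕜), inner_smul_right, norm_smul, norm_div, mul_add, mul_sub,
    mul_left_comm _ 2, hcross]
  field_simp

theorem sum_mul_norm_sub_div_smul_sq_le (x y : EuclideanSpace 𝕜 ι) (hx : x ≠ 0) :
    ∑ i ∈ univ.filter (fun i => x i ≠ 0), ‖x i‖ ^ 2 / ‖x‖ ^ 2 * ‖y - (y i / x i) • x‖ ^ 2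
      ≤ 2 * ‖y‖ ^ 2 - 2 * ‖⟪x, y⟫_𝕜‖ ^ 2 / ‖x‖ ^ 2 := by
  set F := univ.filter (fun i => x i ≠ 0)
  have hsum {f : ι → ℝ} (hf : ∀ i, x i = 0 → f i = 0) : ∑ i ∈ F, f i = ∑ i, f i :=
    sum_filter_of_ne fun i _ hfi hxi => hfi (hf i hxi)
  have hweights : ∑ i ∈ F, ‖x i‖ ^ 2 / ‖x‖ ^ 2 = 1 := by
    rw [← sum_div, hsum fun i hi => by simp [hi], ← EuclideanSpace.norm_sq_eq,
      div_self (by positivity)]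
  have hcross : ∑ i ∈ F, 2 * RCLike.re (conj (x i) * y i * ⟪y, x⟫_𝕜) / ‖x‖ ^ 2
      = 2 * ‖⟪x, y⟫_𝕜‖ ^ 2 / ‖x‖ ^ 2 := by
    rw [← sum_div, ← mul_sum, hsum fun i hi => by simp [hi], ← map_sum, ← sum_mul]
    have hinner : ∑ i, conj (x i) * y i = ⟪x, y⟫_𝕜 := by
      simp only [PiLp.inner_apply, RCLike.inner_apply, mul_comm]
    rw [hinner, ← inner_conj_symm x y, RCLike.conj_mul, ← RCLike.ofReal_pow, RCLike.ofReal_re,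
      RCLike.norm_conj]
  have htail : ∑ i ∈ F, ‖y i‖ ^ 2 ≤ ‖y‖ ^ 2 := by
    rw [EuclideanSpace.norm_sq_eq]
    exact sum_le_sum_of_subset_of_nonneg (filter_subset _ _) fun i _ _ => by positivity
  rw [sum_congr rfl fun i hi => mul_norm_sub_div_smul_sq_eq x y (mem_filter.mp hi).2,
    sum_add_distrib, sum_sub_distrib, ← sum_mul, hweights, hcross]
  linarith

end Pivot

section InnerProductSpace
variable {𝕜 ι E F : Type*} [RCLike 𝕜] [NormedAddCommGroup E] [InnerProductSpace 𝕜 E]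
  [NormedAddCommGroup F] [InnerProductSpace 𝕜 F] {T : E →ₗ[𝕜] F} {w : ι → E} {μ : ι → ℝ}

theorem inner_map_map_sum_smul_of_eigen (hT : ∀ a z, ⟪T (w a), T z⟫_𝕜 = μ a * ⟪w a, z⟫_𝕜)
    (s : Finset ι) (l : ι → 𝕜) (z : E) :
    ⟪T z, T (∑ a ∈ s, l a • w a)⟫_𝕜 = ∑ a ∈ s, μ a * ⟪z, w a⟫_𝕜 * l a := by
  simp only [map_sum, map_smul, inner_sum, inner_smul_right]
  refine sum_congr rfl fun a _ => ?_
  rw [← inner_conj_symm, hT, map_mul, RCLike.conj_ofReal, inner_conj_symm, mul_comm]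

theorem inner_map_map_sum_inner_smul_eq (hw : Orthonormal 𝕜 w)
    (hT : ∀ a z, ⟪T (w a), T z⟫_𝕜 = μ a * ⟪w a, z⟫_𝕜) (s : Finset ι) (u : E) :
    ⟪T u, T (∑ a ∈ s, ⟪w a, u⟫_𝕜 • w a)⟫_𝕜
      = ⟪T (∑ a ∈ s, ⟪w a, u⟫_𝕜 • w a), T (∑ a ∈ s, ⟪w a, u⟫_𝕜 • w a)⟫_𝕜 := by
  simp only [inner_map_map_sum_smul_of_eigen hT]
  refine sum_congr rfl fun a ha => ?_
  rw [hw.inner_left_sum _ ha, inner_conj_symm]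

theorem norm_map_sum_smul_sq_le (hw : Orthonormal 𝕜 w)
    (hT : ∀ a z, ⟪T (w a), T z⟫_𝕜 = μ a * ⟪w a, z⟫_𝕜) {s : Finset ι} {M : ℝ}
    (hM : ∀ a ∈ s, μ a ≤ M) (l : ι → 𝕜) :
    ‖T (∑ a ∈ s, l a • w a)‖ ^ 2 ≤ M * ‖∑ a ∈ s, l a • w a‖ ^ 2 := by
  have hTp : ‖T (∑ a ∈ s, l a • w a)‖ ^ 2 = ∑ a ∈ s, μ a * ‖l a‖ ^ 2 := by
    rw [← inner_self_eq_norm_sq (𝕜 := 𝕜), inner_map_map_sum_smul_of_eigen hT, map_sum]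
    refine sum_congr rfl fun a ha => ?_
    rw [hw.inner_left_sum _ ha, mul_assoc, RCLike.conj_mul, ← RCLike.ofReal_pow,
      ← RCLike.ofReal_mul, RCLike.ofReal_re]
  have hp : ‖∑ a ∈ s, l a • w a‖ ^ 2 = ∑ a ∈ s, ‖l a‖ ^ 2 := by
    rw [← inner_self_eq_norm_sq (𝕜 := 𝕜), hw.inner_sum, map_sum]
    simp only [RCLike.conj_mul, ← RCLike.ofReal_pow, RCLike.ofReal_re]
  rw [hTp, hp, mul_sum]
  exact sum_le_sum fun a ha => by gcongr; exact hM a ha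

theorem norm_sq_sub_norm_inner_sq_div_le {x q : E} {r M : ℝ} (hx : x ≠ 0) (hr : 0 < r)
    (hxq : ⟪x, q⟫_𝕜 = ⟪q, q⟫_𝕜) (hq : ‖q‖ ^ 2 ≤ M * r ^ 2) :
    ‖(r⁻¹ : 𝕜) • q‖ ^ 2 - ‖⟪x, (r⁻¹ : 𝕜) • q⟫_𝕜‖ ^ 2 / ‖x‖ ^ 2
      ≤ M * ‖x - q‖ ^ 2 / ‖x‖ ^ 2 := by
  rw [inner_self_eq_norm_sq_to_K, ← RCLike.ofReal_pow] at hxq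
  have hgap : ‖x - q‖ ^ 2 = ‖x‖ ^ 2 - ‖q‖ ^ 2 := by
    rw [norm_sub_sq (𝕜 := 𝕜), hxq, RCLike.ofReal_re]
    ring
  have hgap_nonneg : 0 ≤ ‖x‖ ^ 2 - ‖q‖ ^ 2 := hgap ▸ by positivity
  rw [inner_smul_right, hxq, norm_mul, norm_smul, hgap, ← RCLike.ofReal_inv, RCLike.norm_ofReal,
    RCLike.norm_ofReal, abs_inv, abs_of_pos hr, abs_of_nonneg (by positivity)]
  have hsplit : (r⁻¹ * ‖q‖) ^ 2 - (r⁻¹ * ‖q‖ ^ 2) ^ 2 / ‖x‖ ^ 2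
      = ‖q‖ ^ 2 / r ^ 2 * ((‖x‖ ^ 2 - ‖q‖ ^ 2) / ‖x‖ ^ 2) := by
    field_simp
  rw [hsplit, mul_div_assoc]
  gcongr
  rwa [div_le_iff₀ (by positivity)]

end InnerProductSpace

section Matrix
variable {𝕜 ι m n : Type*} [RCLike 𝕜] [Fintype m] [Fintype n]

theorem orthonormal_toLp_of_sum_conj_mul [DecidableEq ι] {v : ι → m → 𝕜}
    (hv : ∀ a b, ∑ t, conj (v a t) * v b t = if a = b then 1 else 0) :
    Orthonormal 𝕜 fun a => WithLp.toLp 2 (v a) := by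
  rw [orthonormal_iff_ite]
  intro a b
  rw [EuclideanSpace.inner_toLp_toLp, dotProduct_comm, ← hv a b]
  rfl

theorem star_dotProduct_conjTranspose_mul_mulVec (B : Matrix n m 𝕜) (u g : m → 𝕜) :
    star u ⬝ᵥ ((Bᴴ * B) *ᵥ g) = star (B *ᵥ u) ⬝ᵥ (B *ᵥ g) := by
  rw [← mulVec_mulVec, dotProduct_mulVec, ← star_mulVec]

theorem re_star_dotProduct_conjTranspose_mul_mulVec (B : Matrix n m 𝕜) (g : m → 𝕜) :
    RCLike.re (star g ⬝ᵥ ((Bᴴ * B) *ᵥ g)) = ‖WithLp.toLp 2 (B *ᵥ g)‖ ^ 2 := by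
  rw [star_dotProduct_conjTranspose_mul_mulVec, ← inner_self_eq_norm_sq (𝕜 := 𝕜),
    EuclideanSpace.inner_toLp_toLp, dotProduct_comm]

theorem inner_toEuclideanLin_of_conjTranspose_mul_mulVec_eq [DecidableEq m] (A : Matrix n m 𝕜)
    {v : m → 𝕜} {μ : ℝ} (hv : (Aᴴ * A) *ᵥ v = (μ : 𝕜) • v) (z : EuclideanSpace 𝕜 m) :
    ⟪A.toEuclideanLin (WithLp.toLp 2 v), A.toEuclideanLin z⟫_𝕜
      = μ * ⟪WithLp.toLp 2 v, z⟫_𝕜 := by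
  have h : ⟪A.toEuclideanLin z, A.toEuclideanLin (WithLp.toLp 2 v)⟫_𝕜
      = μ * ⟪z, WithLp.toLp 2 v⟫_𝕜 := by
    change (A *ᵥ v) ⬝ᵥ star (A *ᵥ z.ofLp) = μ * (v ⬝ᵥ star z.ofLp)
    rw [dotProduct_comm, ← star_dotProduct_conjTranspose_mul_mulVec, hv, dotProduct_smul,
      smul_eq_mul, dotProduct_comm]
  rw [← inner_conj_symm, h, map_mul, RCLike.conj_ofReal, inner_conj_symm]

theorem toLp_sum_vecMulVec_star_mulVec [DecidableEq m] (s : Finset ι) (v : ι → m → 𝕜)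
    (u : m → 𝕜) :
    WithLp.toLp 2 ((∑ a ∈ s, vecMulVec (v a) (star (v a))) *ᵥ u)
      = ∑ a ∈ s, ⟪WithLp.toLp 2 (v a), WithLp.toLp 2 u⟫_𝕜 • WithLp.toLp 2 (v a) := by
  simp [sum_mulVec, vecMulVec_mulVec, EuclideanSpace.inner_toLp_toLp, dotProduct_comm]

theorem sub_inv_smul_mul_single_mul_mulVec [DecidableEq m] [DecidableEq n] (A : Matrix n m 𝕜)
    (i : n) (c : m) (g : m → 𝕜) :
    (A - (A i c)⁻¹ • (A * Matrix.single c i (1 : 𝕜) * A)) *ᵥ g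
      = A *ᵥ g - ((A *ᵥ g) i / A i c) • A *ᵥ Pi.single c 1 := by
  rw [sub_mulVec, smul_mulVec, ← mulVec_mulVec, ← mulVec_mulVec, single_mulVec]
  have hupdate : Function.update (0 : m → 𝕜) c (1 * (A *ᵥ g) i)
      = (A *ᵥ g) i • Pi.single c 1 := by
    rw [one_mul, ← Pi.single_smul', smul_eq_mul, mul_one]
    rfl
  rw [hupdate, mulVec_smul, smul_smul, inv_mul_eq_div]

theorem sum_mul_re_star_dotProduct_pivot_eq [DecidableEq m] [DecidableEq n]
    (A : Matrix n m 𝕜) (c : m) (g : m → 𝕜) {x y : EuclideanSpace 𝕜 n}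
    (hx : x = WithLp.toLp 2 (A *ᵥ Pi.single c 1)) (hy : y = WithLp.toLp 2 (A *ᵥ g)) :
    ∑ i ∈ univ.filter (fun i => A i c ≠ 0), (‖A i c‖ ^ 2 / ∑ a, ‖A a c‖ ^ 2) *
        RCLike.re (star g ⬝ᵥ (((A - (A i c)⁻¹ • (A * Matrix.single c i (1 : 𝕜) * A))ᴴ *
          (A - (A i c)⁻¹ • (A * Matrix.single c i (1 : 𝕜) * A))) *ᵥ g))
      = ∑ i ∈ univ.filter (fun i => x i ≠ 0),
          ‖x i‖ ^ 2 / ‖x‖ ^ 2 * ‖y - (y i / x i) • x‖ ^ 2 := by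
  have hxi : ∀ i, x i = A i c := fun i => by simp [hx]
  have hxnorm : ‖x‖ ^ 2 = ∑ a, ‖A a c‖ ^ 2 := by simp only [EuclideanSpace.norm_sq_eq, hxi]
  refine sum_congr (by simp only [hxi]) fun i _ => ?_
  rw [re_star_dotProduct_conjTranspose_mul_mulVec, sub_inv_smul_mul_single_mul_mulVec, hxi,
    hxnorm, hx, hy]
  rfl

end Matrix

theorem rplu_case2_bound_general {n m : ℕ} (k : ℕ) (A : Matrix (Fin n) (Fin m) ℂ)
    (μ : Fin m → ℝ) (hμanti : Antitone μ)
    (v : Fin m → Fin m → ℂ)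
    (horth : ∀ a b, (∑ t, (starRingEnd ℂ) (v a t) * v b t) = if a = b then 1 else 0)
    (heig : ∀ a, (Aᴴ * A).mulVec (v a) = (μ a : ℂ) • v a)
    (P : Matrix (Fin m) (Fin m) ℂ)
    (hP : P = ∑ a ∈ Finset.univ.filter (fun a : Fin m => (a : ℕ) < k),
        Matrix.vecMulVec (v a) (fun t => (starRingEnd ℂ) (v a t)))
    (c : Fin m)
    (σ1 : ℝ) (hσ1sq : σ1 ^ 2 = μ ⟨0, c.pos⟩)
    (hPc : P.mulVec (Pi.single c 1) ≠ 0)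
    (hAc : A.mulVec (Pi.single c 1) ≠ 0)
    (g : Fin m → ℂ)
    (hg : g = (Real.sqrt (∑ t, ‖P.mulVec (Pi.single c 1) t‖ ^ 2) : ℂ)⁻¹ •
        P.mulVec (Pi.single c 1)) :
    (∑ i ∈ Finset.univ.filter (fun i : Fin n => A i c ≠ 0),
        (‖A i c‖ ^ 2 / ∑ a, ‖A a c‖ ^ 2) *
          (dotProduct (star g)
            (((A - (A i c)⁻¹ • (A * Matrix.single c i (1 : ℂ) * A))ᴴ *
                (A - (A i c)⁻¹ • (A * Matrix.single c i (1 : ℂ) * A))).mulVec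
              g)).re)
      ≤ 2 * σ1 ^ 2 *
          (∑ t, ‖A.mulVec ((1 - P).mulVec (Pi.single c 1)) t‖ ^ 2) /
          (∑ a, ‖A a c‖ ^ 2) := by
  set e : Fin m → ℂ := Pi.single c 1
  set w : Fin m → EuclideanSpace ℂ (Fin m) := fun a => WithLp.toLp 2 (v a)
  set p := ∑ a ∈ univ.filter (fun a : Fin m => (a : ℕ) < k), ⟪w a, WithLp.toLp 2 e⟫_ℂ • w a
  have hp : WithLp.toLp 2 (P *ᵥ e) = p := hP ▸ toLp_sum_vecMulVec_star_mulVec _ v e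
  have hw : Orthonormal ℂ w := orthonormal_toLp_of_sum_conj_mul horth
  have hT (a) := inner_toEuclideanLin_of_conjTranspose_mul_mulVec_eq A (heig a)
  set x := A.toEuclideanLin (WithLp.toLp 2 e)
  set q := A.toEuclideanLin p with hq_def
  set y : EuclideanSpace ℂ (Fin n) := WithLp.toLp 2 (A *ᵥ g) with hy_def
  have hx : x ≠ 0 := (WithLp.toLp_eq_zero 2).not.mpr hAc
  have hr : 0 < ‖p‖ := norm_pos_iff.mpr (hp ▸ (WithLp.toLp_eq_zero 2).not.mpr hPc)
  have hy : y = ((‖p‖ : ℝ) : ℂ)⁻¹ • q := by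
    rw [hy_def, hq_def, ← hp, EuclideanSpace.norm_eq, hg, mulVec_smul]
    rfl
  have hres : x - q = WithLp.toLp 2 (A *ᵥ ((1 - P) *ᵥ e)) := by
    rw [sub_mulVec, one_mulVec, mulVec_sub, WithLp.toLp_sub, hq_def, ← hp]
    rfl
  calc _ = ∑ i ∈ univ.filter (fun i => x i ≠ 0),
          ‖x i‖ ^ 2 / ‖x‖ ^ 2 * ‖y - (y i / x i) • x‖ ^ 2 :=
        sum_mul_re_star_dotProduct_pivot_eq A c g rfl rfl
    _ ≤ 2 * ‖y‖ ^ 2 - 2 * ‖⟪x, y⟫_ℂ‖ ^ 2 / ‖x‖ ^ 2 := sum_mul_norm_sub_div_smul_sq_le x y hx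
    _ ≤ 2 * σ1 ^ 2 * ‖x - q‖ ^ 2 / ‖x‖ ^ 2 := by
        have hxq : ⟪x, q⟫_ℂ = ⟪q, q⟫_ℂ := inner_map_map_sum_inner_smul_eq hw hT _ _
        have hqp : ‖q‖ ^ 2 ≤ σ1 ^ 2 * ‖p‖ ^ 2 :=
          hσ1sq ▸ norm_map_sum_smul_sq_le hw hT (fun a _ => hμanti (Nat.zero_le (a : ℕ))) _
        rw [hy]
        linear_combination 2 * norm_sq_sub_norm_inner_sq_div_le hx hr hxq hqp
    _ = _ := by
        rw [hres, EuclideanSpace.norm_sq_eq, EuclideanSpace.norm_sq_eq]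
        simp [x, e]

/-- **Theorem (case 2 bound in the RPLU doubling proof).**
Let `A ∈ ℂ^{n×m}` be nonzero with Gram matrix `G = AᴴA`, whose eigenvalues `μ` (listed in
nonincreasing order, with orthonormal eigenvectors `v`) have largest value `μ₀ = σ₁²`.
Let `P = ∑_{a<k} v_a v_aᴴ` be the orthogonal projector onto the span of the top `k`
eigenvectors of `G`, and `P⊥ = I − P`.  Fix a column `c` with `P e_c ≠ 0` and `A e_c ≠ 0`,
and set `g = P e_c / ‖P e_c‖₂`.  With `A¹(i,c) = A − A_{ic}⁻¹ A e_c e_iᵀ A` and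
`G¹(i,c) = A¹(i,c)ᴴ A¹(i,c)`, the expectation over the row pivot `i ∼ |A_{ic}|²/‖A e_c‖₂²`
satisfies `𝔼[gᴴ G¹ g] ≤ 2 σ₁² ‖A P⊥ e_c‖₂² / ‖A e_c‖₂²`. -/
theorem rplu_case2_bound {n m : ℕ} (k : ℕ) (A : Matrix (Fin n) (Fin m) ℂ) (hA : A ≠ 0)
    (μ : Fin m → ℝ) (hμanti : Antitone μ)
    (v : Fin m → Fin m → ℂ)
    (horth : ∀ a b, (∑ t, (starRingEnd ℂ) (v a t) * v b t) = if a = b then 1 else 0)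
    (heig : ∀ a, (Aᴴ * A).mulVec (v a) = (μ a : ℂ) • v a)
    (P : Matrix (Fin m) (Fin m) ℂ)
    (hP : P = ∑ a ∈ Finset.univ.filter (fun a : Fin m => (a : ℕ) < k),
        Matrix.vecMulVec (v a) (fun t => (starRingEnd ℂ) (v a t)))
    (c : Fin m)
    (σ1 : ℝ) (hσ1 : 0 ≤ σ1) (hσ1sq : σ1 ^ 2 = μ ⟨0, c.pos⟩)
    (hPc : P.mulVec (Pi.single c 1) ≠ 0)
    (hAc : A.mulVec (Pi.single c 1) ≠ 0)
    (g : Fin m → ℂ)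
    (hg : g = (Real.sqrt (∑ t, ‖P.mulVec (Pi.single c 1) t‖ ^ 2) : ℂ)⁻¹ •
        P.mulVec (Pi.single c 1)) :
    (∑ i ∈ Finset.univ.filter (fun i : Fin n => A i c ≠ 0),
        (‖A i c‖ ^ 2 / ∑ a, ‖A a c‖ ^ 2) *
          (dotProduct (star g)
            (((A - (A i c)⁻¹ • (A * Matrix.single c i (1 : ℂ) * A))ᴴ *
                (A - (A i c)⁻¹ • (A * Matrix.single c i (1 : ℂ) * A))).mulVec
              g)).re)
      ≤ 2 * σ1 ^ 2 *
          (∑ t, ‖A.mulVec ((1 - P).mulVec (Pi.single c 1)) t‖ ^ 2) /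
          (∑ a, ‖A a c‖ ^ 2) :=
  rplu_case2_bound_general k A μ hμanti v horth heig P hP c σ1 hσ1sq hPc hAc g hg
end

section
/- Let C ∈ ℂ^{n×n} be a nonzero positive semidefinite matrix. For each diagonal index i with C_{ii} ≠ 0, let C^{(1)}(i) = C − (1/C_{ii}) C e_i e_i^T C be the one-step pivoted Cholesky residual. Then the expected residual of one step of randomly pivoted Cholesky equals Φ(C): Σ_{i: C_{ii} ≠ 0} (C_{ii}/tr(C)) · C^{(1)}(i) = C − C²/tr(C). -/
/-!
Each weight `C i i / tr C` cancels the `(C i i)⁻¹` of its pivot term, so the expected residual is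
`C - (tr C)⁻¹ • ∑ᵢ C Eᵢᵢ C = C - (tr C)⁻¹ • C²`. The sum over all `i` is the right one although
pivots with `C i i = 0` are never sampled: for positive semidefinite `C` the `i`-th column then
vanishes, and so does `C Eᵢᵢ C`.
-/

open Matrix Finset
open scoped ComplexOrder

namespace Matrix

variable {n : Type*} [Fintype n] [DecidableEq n]

theorem PosSemidef.col_eq_zero_of_diag_eq_zero {𝕜 : Type*} [RCLike 𝕜] {A : Matrix n n 𝕜}
    (hA : A.PosSemidef) {i : n} (hi : A i i = 0) : A.col i = 0 := by
  have hquad : star (Pi.single i 1 : n → 𝕜) ⬝ᵥ A *ᵥ Pi.single i 1 = 0 := by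
    simpa [mulVec_single_one] using hi
  simpa [mulVec_single_one] using (hA.dotProduct_mulVec_zero_iff _).mp hquad

theorem mul_single_eq_zero_of_col_eq_zero {m α : Type*} [NonUnitalNonAssocSemiring α]
    {A : Matrix m n α} {i : n} (h : A.col i = 0) (j : n) (r : α) : A * single i j r = 0 := by
  rw [mul_single_eq_updateCol_zero, h]
  simp

theorem sum_diag_div_trace_smul_pivot_residual {K : Type*} [Field K] [DecidableEq K]
    (C : Matrix n n K) (ht : C.trace ≠ 0) (hcol : ∀ i, C i i = 0 → C.col i = 0) :
    ∑ i ∈ univ.filter (fun i => C i i ≠ 0),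
        (C i i / C.trace) • (C - (C i i)⁻¹ • (C * single i i 1 * C))
      = C - C.trace⁻¹ • (C * C) := by
  have hterm : ∀ i ∈ univ.filter (fun i => C i i ≠ 0),
      (C i i / C.trace) • (C - (C i i)⁻¹ • (C * single i i 1 * C))
        = (C i i / C.trace) • C - C.trace⁻¹ • (C * single i i 1 * C) := by
    intro i hi
    rw [smul_sub, smul_smul, div_mul_eq_mul_div, mul_inv_cancel₀ (mem_filter.mp hi).2, one_div]
  have hweights : ∑ i ∈ univ.filter (fun i => C i i ≠ 0), C i i / C.trace = 1 := by
    rw [← sum_div, sum_filter_ne_zero, div_eq_one_iff_eq ht]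
    rfl
  have hpivots : ∑ i ∈ univ.filter (fun i => C i i ≠ 0), C * single i i 1 * C = C * C := by
    have hzero : ∀ i, C i i = 0 → C * single i i 1 * C = 0 := fun i hi => by
      rw [mul_single_eq_zero_of_col_eq_zero (hcol i hi), Matrix.zero_mul]
    rw [sum_filter_of_ne (p := fun i => C i i ≠ 0) fun i _ hne hi => hne (hzero i hi),
      ← sum_mul, ← mul_sum, sum_single_one, Matrix.mul_one]
  rw [sum_congr rfl hterm, sum_sub_distrib, ← sum_smul, hweights, one_smul, ← smul_sum, hpivots]

end Matrix

theorem rpcholesky_expected_residual_general {n : ℕ} (C : Matrix (Fin n) (Fin n) ℂ)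
    (hC : C.PosSemidef) :
    (∑ i ∈ Finset.univ.filter (fun i : Fin n => C i i ≠ 0),
        (C i i / Matrix.trace C) •
          (C - (C i i)⁻¹ • (C * Matrix.single i i (1 : ℂ) * C)))
      = C - (Matrix.trace C)⁻¹ • (C * C) := by
  by_cases ht : C.trace = 0
  · obtain rfl := hC.trace_eq_zero_iff.mp ht
    simp
  · exact sum_diag_div_trace_smul_pivot_residual C ht fun i => hC.col_eq_zero_of_diag_eq_zero

/-- **Theorem (expected one-step RPCholesky residual).**
For a nonzero PSD matrix `C ∈ ℂ^{n×n}`, sampling a diagonal pivot `i` with probability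
`C_{ii}/tr(C)` and forming `C¹(i) = C − C_{ii}⁻¹ C e_i e_iᵀ C`, the expected residual is
`Φ(C)`:  `∑_{i : C_{ii} ≠ 0} (C_{ii}/tr C) · C¹(i) = C − C²/tr(C)`. -/
theorem rpcholesky_expected_residual {n : ℕ} (C : Matrix (Fin n) (Fin n) ℂ)
    (hC : C.PosSemidef) (hC0 : C ≠ 0) :
    (∑ i ∈ Finset.univ.filter (fun i : Fin n => C i i ≠ 0),
        (C i i / Matrix.trace C) •
          (C - (C i i)⁻¹ • (C * Matrix.single i i (1 : ℂ) * C)))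
      = C - (Matrix.trace C)⁻¹ • (C * C) :=
  rpcholesky_expected_residual_general C hC
end
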